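/- arXiv:1609.03961 — 5 statements merged into one kernel-verified Lean document; each statement's English description precedes it below -/
import Mathlib

section
/- Let G = ({1,...,n}, E) be a connected undirected graph in which every node is its own neighbor, and let A = [a_ij] be an n×n doubly stochastic matrix (all entries nonnegative, every row and every column sums to 1) such that a_ij > 0 and a_ji > 0 whenever (i,j) ∈ E. If the vectors x(t) ∈ ℝ^n evolve as x(t+1) = A x(t) from an arbitrary initial vector x(0), then for every i = 1,...,n, the sequence x_i(t) converges to the average x̄ = (1/n) ∑_{j=1}^n x_j(0). -/
open Finset Filter

/-- Row sums of powers of a row-stochastic matrix are 1. -/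
private lemma consensus_rowsum_pow {n : ℕ} (A : Matrix (Fin n) (Fin n) ℝ)
    (hrow : ∀ i, ∑ j, A i j = 1) : ∀ (k : ℕ) (i : Fin n), ∑ j, (A ^ k) i j = 1 := by
  intro k
  induction k with
  | zero => intro i; simp [Matrix.one_apply]
  | succ k ih =>
    intro i
    rw [pow_succ]
    simp only [Matrix.mul_apply]
    rw [Finset.sum_comm]
    simp only [← Finset.mul_sum, hrow, mul_one]
    exact ih i

/-- Entries of powers of a nonnegative matrix are nonnegative. -/
private lemma consensus_nonneg_pow {n : ℕ} (A : Matrix (Fin n) (Fin n) ℝ)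
    (hnn : ∀ i j, 0 ≤ A i j) : ∀ (k : ℕ) (i j : Fin n), 0 ≤ (A ^ k) i j := by
  intro k
  induction k with
  | zero => intro i j; rw [pow_zero, Matrix.one_apply]; positivity
  | succ k ih =>
    intro i j
    rw [pow_succ, Matrix.mul_apply]
    exact Finset.sum_nonneg fun l _ => mul_nonneg (ih i l) (hnn l j)

/-- If `(A^k) i b > 0` and `A b j > 0`, then `(A^(k+1)) i j > 0`. -/
private lemma consensus_pos_step {n : ℕ} (A : Matrix (Fin n) (Fin n) ℝ)
    (hnn : ∀ i j, 0 ≤ A i j) {k : ℕ} {i b j : Fin n}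
    (h1 : 0 < (A ^ k) i b) (h2 : 0 < A b j) : 0 < (A ^ (k + 1)) i j := by
  rw [pow_succ, Matrix.mul_apply]
  have hle : (A ^ k) i b * A b j ≤ ∑ l, (A ^ k) i l * A l j :=
    Finset.single_le_sum
      (fun l _ => mul_nonneg (consensus_nonneg_pow A hnn k i l) (hnn l j))
      (Finset.mem_univ b)
  exact lt_of_lt_of_le (mul_pos h1 h2) hle

/-- Key oscillation bound for a stochastic matrix whose entries are all `≥ γ`. -/
private lemma consensus_osc_bound {n : ℕ} (hne : (Finset.univ : Finset (Fin n)).Nonempty)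
    (B : Matrix (Fin n) (Fin n) ℝ) (γ : ℝ) (hγ : 0 ≤ γ)
    (hB : ∀ i j, γ ≤ B i j) (hBnn : ∀ i j, 0 ≤ B i j)
    (hrow : ∀ i, ∑ j, B i j = 1) (z : Fin n → ℝ) :
    (∀ i, Finset.univ.inf' hne z ≤ B.mulVec z i) ∧
    (∀ i, B.mulVec z i ≤ Finset.univ.sup' hne z
        - γ * (Finset.univ.sup' hne z - Finset.univ.inf' hne z)) := by
  classical
  set S := Finset.univ.sup' hne z with hS
  set I := Finset.univ.inf' hne z with hI
  obtain ⟨i0, -⟩ := id hne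
  have hIS : I ≤ S := le_trans (Finset.inf'_le z (Finset.mem_univ i0))
    (Finset.le_sup' z (Finset.mem_univ i0))
  constructor
  · intro i
    have h1 : ∀ j ∈ Finset.univ, B i j * I ≤ B i j * z j := fun j _ =>
      mul_le_mul_of_nonneg_left (Finset.inf'_le z (Finset.mem_univ j)) (hBnn i j)
    have h2 : ∑ j, B i j * I = I := by rw [← Finset.sum_mul, hrow, one_mul]
    have := Finset.sum_le_sum h1
    rw [h2] at this
    simpa [Matrix.mulVec, dotProduct] using this
  · intro i
    obtain ⟨j0, -, hj0⟩ := Finset.exists_mem_eq_inf' hne z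
    have hsplit : B.mulVec z i = B i j0 * z j0 + ∑ j ∈ Finset.univ.erase j0, B i j * z j := by
      simp only [Matrix.mulVec, dotProduct]
      exact (Finset.add_sum_erase _ _ (Finset.mem_univ j0)).symm
    have herase : ∑ j ∈ Finset.univ.erase j0, B i j * z j
        ≤ ∑ j ∈ Finset.univ.erase j0, B i j * S :=
      Finset.sum_le_sum fun j _ =>
        mul_le_mul_of_nonneg_left (Finset.le_sup' z (Finset.mem_univ j)) (hBnn i j)
    have hsum_erase : ∑ j ∈ Finset.univ.erase j0, B i j * S = (1 - B i j0) * S := by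
      rw [← Finset.sum_mul, Finset.sum_erase_eq_sub (Finset.mem_univ j0), hrow]
    have hzI : z j0 = I := hj0.symm
    have hBij0 : γ ≤ B i j0 := hB i j0
    have : B.mulVec z i ≤ B i j0 * I + (1 - B i j0) * S := by
      rw [hsplit, hzI]
      linarith [herase, hsum_erase]
    nlinarith [hBij0, hIS]

/-- Convergence of the linear consensus iteration `x(t+1) = A x(t)`
for a doubly stochastic matrix `A` compatible with a connected graph in which every
node is its own neighbor: every coordinate converges to the average of the initial values. -/
theorem consensus_convergence
    (n : ℕ) (hn : 0 < n)
    (E : Fin n → Fin n → Prop)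
    (hE_symm : ∀ i j, E i j → E j i)
    (hE_refl : ∀ i, E i i)
    (hE_conn : ∀ i j, Relation.ReflTransGen E i j)
    (A : Matrix (Fin n) (Fin n) ℝ)
    (hA_nonneg : ∀ i j, 0 ≤ A i j)
    (hA_row : ∀ i, ∑ j, A i j = 1)
    (hA_col : ∀ j, ∑ i, A i j = 1)
    (hA_pos : ∀ i j, E i j → 0 < A i j ∧ 0 < A j i)
    (x : ℕ → Fin n → ℝ)
    (hx : ∀ t, x (t + 1) = A.mulVec (x t)) :
    ∀ i, Filter.Tendsto (fun t => x t i) Filter.atTop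
      (nhds ((∑ j, x 0 j) / n)) := by
  classical
  have hfne : Nonempty (Fin n) := Fin.pos_iff_nonempty.mp hn
  have hne : (Finset.univ : Finset (Fin n)).Nonempty := Finset.univ_nonempty
  have hdiag : ∀ j : Fin n, 0 < A j j := fun j => (hA_pos j j (hE_refl j)).1
  -- positivity of entries of powers persists
  have hpersist : ∀ {k : ℕ} {i j : Fin n}, 0 < (A ^ k) i j → ∀ k', k ≤ k' → 0 < (A ^ k') i j := by
    intro k i j h k' hk'
    induction k' , hk' using Nat.le_induction with
    | base => exact h
    | succ m hm ih => exact consensus_pos_step A hA_nonneg ih (hdiag j)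
  -- for each pair there is a power with positive entry
  have hex : ∀ i j : Fin n, ∃ k, 0 < (A ^ k) i j := by
    intro i j
    induction hE_conn i j with
    | refl => exact ⟨0, by simp [Matrix.one_apply_eq]⟩
    | tail hab hbc ih =>
      obtain ⟨k, hk⟩ := ih
      exact ⟨k + 1, consensus_pos_step A hA_nonneg hk (hA_pos _ _ hbc).1⟩
  choose kf hkf using hex
  set K : ℕ := max 1 (Finset.univ.sup fun i => Finset.univ.sup fun j => kf i j) with hK
  have hK1 : 1 ≤ K := le_max_left _ _
  have hKpos : 0 < K := hK1
  have hBpos : ∀ i j : Fin n, 0 < (A ^ K) i j := by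
    intro i j
    refine hpersist (hkf i j) K ?_
    calc kf i j ≤ Finset.univ.sup fun j => kf i j := Finset.le_sup (Finset.mem_univ j)
      _ ≤ Finset.univ.sup fun i => Finset.univ.sup fun j => kf i j :=
          Finset.le_sup (f := fun i => Finset.univ.sup fun j => kf i j) (Finset.mem_univ i)
      _ ≤ K := le_max_right _ _
  -- the minimal entry of A^K
  have hne2 : (Finset.univ : Finset (Fin n × Fin n)).Nonempty := Finset.univ_nonempty
  set γ : ℝ := Finset.univ.inf' hne2 (fun p : Fin n × Fin n => (A ^ K) p.1 p.2) with hγdef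
  have hγpos : 0 < γ := by
    obtain ⟨p, -, hp⟩ := Finset.exists_mem_eq_inf' hne2 (fun p : Fin n × Fin n => (A ^ K) p.1 p.2)
    rw [hγdef, hp]; exact hBpos p.1 p.2
  have hγle : ∀ i j, γ ≤ (A ^ K) i j := fun i j =>
    Finset.inf'_le _ (Finset.mem_univ ((i, j) : Fin n × Fin n))
  have hγ1 : γ ≤ 1 := by
    obtain ⟨i0⟩ := hfne
    have h1 : γ ≤ (A ^ K) i0 i0 := hγle i0 i0
    have h2 : (A ^ K) i0 i0 ≤ ∑ j, (A ^ K) i0 j :=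
      Finset.single_le_sum (fun j _ => consensus_nonneg_pow A hA_nonneg K i0 j)
        (Finset.mem_univ i0)
    rw [consensus_rowsum_pow A hA_row K i0] at h2
    linarith
  -- oscillation
  set d : ℕ → ℝ := fun t => Finset.univ.sup' hne (x t) - Finset.univ.inf' hne (x t) with hd
  have hdnn : ∀ t, 0 ≤ d t := by
    intro t
    obtain ⟨i0⟩ := hfne
    have := le_trans (Finset.inf'_le (x t) (Finset.mem_univ i0))
      (Finset.le_sup' (x t) (Finset.mem_univ i0))
    simp only [hd]; linarith
  -- iterate formula
  have hstep : ∀ t s, x (t + s) = (A ^ s).mulVec (x t) := by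
    intro t s
    induction s with
    | zero => simp [Matrix.one_mulVec]
    | succ s ih =>
      have : t + (s + 1) = (t + s) + 1 := by ring
      rw [this, hx (t + s), ih, Matrix.mulVec_mulVec, ← pow_succ']
  -- oscillation is nonincreasing
  have hd_anti : Antitone d := by
    apply antitone_nat_of_succ_le
    intro t
    have hb := consensus_osc_bound hne A 0 le_rfl (fun i j => hA_nonneg i j) hA_nonneg hA_row (x t)
    have hup : Finset.univ.sup' hne (x (t + 1)) ≤ Finset.univ.sup' hne (x t) := by
      apply Finset.sup'_le
      intro i _
      have := hb.2 i
      rw [hx t]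
      simpa using this
    have hlo : Finset.univ.inf' hne (x t) ≤ Finset.univ.inf' hne (x (t + 1)) := by
      apply Finset.le_inf'
      intro i _
      have := hb.1 i
      rw [hx t]
      exact this
    simp only [hd]; linarith
  -- contraction over K steps
  have hcontr : ∀ t, d (t + K) ≤ (1 - γ) * d t := by
    intro t
    have hb := consensus_osc_bound hne (A ^ K) γ (le_of_lt hγpos) hγle
      (consensus_nonneg_pow A hA_nonneg K) (consensus_rowsum_pow A hA_row K) (x t)
    have hxK : x (t + K) = (A ^ K).mulVec (x t) := hstep t K
    have hup : Finset.univ.sup' hne (x (t + K)) ≤ Finset.univ.sup' hne (x t)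
        - γ * (Finset.univ.sup' hne (x t) - Finset.univ.inf' hne (x t)) := by
      apply Finset.sup'_le
      intro i _
      rw [hxK]
      exact hb.2 i
    have hlo : Finset.univ.inf' hne (x t) ≤ Finset.univ.inf' hne (x (t + K)) := by
      apply Finset.le_inf'
      intro i _
      rw [hxK]
      exact hb.1 i
    simp only [hd]
    nlinarith [hup, hlo]
  -- iterated contraction
  have hiter : ∀ m : ℕ, d (m * K) ≤ (1 - γ) ^ m * d 0 := by
    intro m
    induction m with
    | zero => simp
    | succ m ih =>
      have h1 : (m + 1) * K = m * K + K := by ring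
      rw [h1]
      calc d (m * K + K) ≤ (1 - γ) * d (m * K) := hcontr (m * K)
        _ ≤ (1 - γ) * ((1 - γ) ^ m * d 0) :=
            mul_le_mul_of_nonneg_left ih (by linarith)
        _ = (1 - γ) ^ (m + 1) * d 0 := by ring
  -- sum invariance
  have hsum : ∀ t, ∑ j, x t j = ∑ j, x 0 j := by
    intro t
    induction t with
    | zero => rfl
    | succ t ih =>
      rw [hx t, ← ih]
      simp only [Matrix.mulVec, dotProduct]
      rw [Finset.sum_comm]
      simp only [← Finset.sum_mul, hA_col, one_mul]
  -- the average lies between min and max at every time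
  set avg : ℝ := (∑ j, x 0 j) / n with havg
  have havg_mem : ∀ t, Finset.univ.inf' hne (x t) ≤ avg ∧ avg ≤ Finset.univ.sup' hne (x t) := by
    intro t
    have hnR : (0 : ℝ) < n := by exact_mod_cast hn
    have hle1 : (n : ℝ) * Finset.univ.inf' hne (x t) ≤ ∑ j, x t j := by
      have : ∑ j, Finset.univ.inf' hne (x t) ≤ ∑ j, x t j :=
        Finset.sum_le_sum fun j _ => Finset.inf'_le (x t) (Finset.mem_univ j)
      simpa [Finset.sum_const, Finset.card_univ, nsmul_eq_mul] using this
    have hle2 : ∑ j, x t j ≤ (n : ℝ) * Finset.univ.sup' hne (x t) := by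
      have : ∑ j, x t j ≤ ∑ j, Finset.univ.sup' hne (x t) :=
        Finset.sum_le_sum fun j _ => Finset.le_sup' (x t) (Finset.mem_univ j)
      simpa [Finset.sum_const, Finset.card_univ, nsmul_eq_mul] using this
    rw [hsum t] at hle1 hle2
    constructor
    · rw [havg, le_div_iff₀ hnR]; linarith
    · rw [havg, div_le_iff₀ hnR]; linarith
  -- coordinatewise distance to average bounded by oscillation
  have hdist : ∀ t (i : Fin n), |x t i - avg| ≤ d t := by
    intro t i
    have h1 := (havg_mem t).1
    have h2 := (havg_mem t).2
    have h3 : x t i ≤ Finset.univ.sup' hne (x t) := Finset.le_sup' (x t) (Finset.mem_univ i)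
    have h4 : Finset.univ.inf' hne (x t) ≤ x t i := Finset.inf'_le (x t) (Finset.mem_univ i)
    rw [abs_le]
    constructor <;> simp only [hd] <;> linarith
  -- oscillation tends to 0 geometrically
  have hdbound : ∀ t, d t ≤ (1 - γ) ^ (t / K) * d 0 := by
    intro t
    have h1 : (t / K) * K ≤ t := Nat.div_mul_le_self t K
    calc d t ≤ d ((t / K) * K) := hd_anti h1
      _ ≤ (1 - γ) ^ (t / K) * d 0 := hiter (t / K)
  have hdivtop : Tendsto (fun t : ℕ => t / K) atTop atTop := by
    apply tendsto_atTop_atTop.2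
    intro b
    exact ⟨b * K, fun a ha => (Nat.le_div_iff_mul_le hKpos).2 ha⟩
  have hpow : Tendsto (fun t : ℕ => (1 - γ) ^ (t / K)) atTop (nhds 0) :=
    (tendsto_pow_atTop_nhds_zero_of_lt_one (by linarith) (by linarith)).comp hdivtop
  have hgeo : Tendsto (fun t : ℕ => (1 - γ) ^ (t / K) * d 0) atTop (nhds 0) := by
    simpa using hpow.mul_const (d 0)
  intro i
  rw [tendsto_iff_dist_tendsto_zero]
  apply squeeze_zero (fun t => dist_nonneg)
  · intro t
    calc dist (x t i) avg = |x t i - avg| := Real.dist_eq _ _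
      _ ≤ d t := hdist t i
      _ ≤ (1 - γ) ^ (t / K) * d 0 := hdbound t
  · exact hgeo
end

section
/- Let G = ({1,...,n}, E) be a connected undirected graph in which every node is its own neighbor, and let A = [a_ij] be an n×n doubly stochastic matrix such that a_ij > 0 and a_ji > 0 whenever (i,j) ∈ E. Let η = min{ a_ij : a_ij > 0 } be the smallest positive entry of A. If x(t+1) = A x(t) and E(t) = ||x(t) − x̄ 1||₂², then for every t ≥ 0, E(t) ≤ (1 − η/(2n²))^t · E(0). -/
/-!
The error `e(t) = x(t) - x̄ 1` keeps zero sum and evolves by `e(t+1) = A e(t)`. For doubly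
stochastic `A` one has `‖A y‖² = ‖y‖² - D(y)/2` with the Dirichlet form
`D(y) = ∑ᵢⱼ (AᵀA)ᵢⱼ (yᵢ - yⱼ)²`. By connectivity every cut `(S, Sᶜ)` is crossed by an edge
`(a, b)`; row `a` of `A` then puts mass at least `η` on each side of the cut, so `AᵀA` has weight
at least `η` across it. Sorting `y` and charging the squared gap between consecutive sorted
values to the cut separating them gives `η (max y - min y)² ≤ (n - 1) D(y)`, while a zero-sum
vector has `‖y‖² ≤ n (max y - min y)² / 4`. Hence `D(y) ≥ η ‖y‖² / n²`, which is a contraction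
by the factor `1 - η / (2n²)` at every step.
-/

open Finset Matrix

theorem Relation.ReflTransGen.exists_rel_across {α : Type*} {r : α → α → Prop} {p : α → Prop}
    {a b : α} (h : Relation.ReflTransGen r a b) (ha : p a) (hb : ¬ p b) :
    ∃ c d, p c ∧ ¬ p d ∧ r c d := by
  induction h with
  | refl => exact absurd ha hb
  | @tail c d _ hcd ih =>
    by_cases hc : p c
    · exact ⟨c, d, hc, hb, hcd⟩
    · exact ih hc

theorem sum_sq_le_card_mul_sq_sub_div_four {ι : Type*} [Fintype ι] {y : ι → ℝ}
    (hy : ∑ i, y i = 0) {a b : ℝ} (ha : ∀ i, a ≤ y i) (hb : ∀ i, y i ≤ b) :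
    ∑ i, y i ^ 2 ≤ Fintype.card ι * (b - a) ^ 2 / 4 := by
  calc ∑ i, y i ^ 2 ≤ ∑ i, ((a + b) * y i - a * b) :=
        sum_le_sum fun i _ => by nlinarith [ha i, hb i]
    _ = -(Fintype.card ι * (a * b)) := by
        rw [sum_sub_distrib, ← mul_sum, hy, sum_const, card_univ, nsmul_eq_mul]; ring
    _ ≤ Fintype.card ι * (b - a) ^ 2 / 4 := by
        have : (0 : ℝ) ≤ Fintype.card ι := by positivity
        nlinarith [mul_nonneg this (sq_nonneg (a + b))]

theorem sum_ite_sq_sub_le_sq_sub {v : ℕ → ℝ} (hv : Monotone v) (a b N : ℕ) :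
    ∑ l ∈ range N, (if (a ≤ l ↔ b ≤ l) then 0 else (v (l + 1) - v l) ^ 2) ≤ (v a - v b) ^ 2 := by
  wlog hab : a ≤ b generalizing a b
  · simpa only [iff_comm, sub_sq_comm (v a)] using this b a (by omega)
  have between : ∀ l, (if (a ≤ l ↔ b ≤ l) then 0 else (v (l + 1) - v l) ^ 2)
      = if l ∈ Ico a b then (v (l + 1) - v l) ^ 2 else 0 := by
    intro l
    simp only [mem_Ico]
    split_ifs <;> first | rfl | omega
  calc ∑ l ∈ range N, (if (a ≤ l ↔ b ≤ l) then 0 else (v (l + 1) - v l) ^ 2)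
      = ∑ l ∈ range N ∩ Ico a b, (v (l + 1) - v l) ^ 2 := by simp only [between, sum_ite_mem]
    _ ≤ ∑ l ∈ Ico a b, (v (l + 1) - v l) ^ 2 :=
      sum_le_sum_of_subset_of_nonneg inter_subset_right fun _ _ _ => sq_nonneg _
    _ ≤ (∑ l ∈ Ico a b, (v (l + 1) - v l)) ^ 2 :=
      sum_sq_le_sq_sum_of_nonneg fun l _ => sub_nonneg.2 (hv l.le_succ)
    _ = (v a - v b) ^ 2 := by rw [sum_Ico_sub _ hab, sub_sq_comm]

section Cuts

variable {ι : Type*} [Fintype ι]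

def dirichletForm (M : Matrix ι ι ℝ) (y : ι → ℝ) : ℝ :=
  ∑ i, ∑ j, M i j * (y i - y j) ^ 2

theorem dirichletForm_nonneg {M : Matrix ι ι ℝ} (hM : ∀ i j, 0 ≤ M i j) (y : ι → ℝ) :
    0 ≤ dirichletForm M y :=
  sum_nonneg fun i _ => sum_nonneg fun j _ => mul_nonneg (hM i j) (sq_nonneg _)

variable [DecidableEq ι]

theorem dirichletForm_eq {M : Matrix ι ι ℝ} (hM : M ∈ doublyStochastic ℝ ι) (y : ι → ℝ) :
    dirichletForm M y = 2 * (∑ i, y i ^ 2 - y ⬝ᵥ (M *ᵥ y)) := by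
  have rows : ∑ i, ∑ j, M i j * y i ^ 2 = ∑ i, y i ^ 2 := by
    simp only [← sum_mul, sum_row_of_mem_doublyStochastic hM, one_mul]
  have cols : ∑ i, ∑ j, M i j * y j ^ 2 = ∑ j, y j ^ 2 := by
    rw [sum_comm]
    simp only [← sum_mul, sum_col_of_mem_doublyStochastic hM, one_mul]
  have cross : y ⬝ᵥ (M *ᵥ y) = ∑ i, ∑ j, M i j * y i * y j := by
    simp only [dotProduct, mulVec, mul_sum]
    exact sum_congr rfl fun i _ => sum_congr rfl fun j _ => by ring
  calc dirichletForm M y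
      = ∑ i, ∑ j, (M i j * y i ^ 2 + M i j * y j ^ 2 - 2 * (M i j * y i * y j)) :=
        sum_congr rfl fun i _ => sum_congr rfl fun j _ => by ring
    _ = 2 * (∑ i, y i ^ 2 - y ⬝ᵥ (M *ᵥ y)) := by
        simp only [sum_add_distrib, sum_sub_distrib, ← mul_sum, rows, cols, cross]
        ring

theorem sum_mulVec_sq_eq_sub_dirichletForm {A : Matrix ι ι ℝ} (hA : A ∈ doublyStochastic ℝ ι)
    (y : ι → ℝ) :
    ∑ i, (A *ᵥ y) i ^ 2 = ∑ i, y i ^ 2 - dirichletForm (Aᵀ * A) y / 2 := by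
  have gram : ∑ i, (A *ᵥ y) i ^ 2 = y ⬝ᵥ ((Aᵀ * A) *ᵥ y) := by
    rw [← mulVec_mulVec, dotProduct_mulVec, vecMul_transpose, dotProduct]
    simp only [sq]
  rw [dirichletForm_eq (mul_mem (transpose_mem_doublyStochastic_iff.2 hA) hA), gram]
  ring

def cutWeight (M : Matrix ι ι ℝ) (S : Finset ι) : ℝ :=
  ∑ i ∈ S, ∑ j ∈ Sᶜ, (M i j + M j i)

theorem cutWeight_eq_sum_ite (M : Matrix ι ι ℝ) (S : Finset ι) :
    cutWeight M S = ∑ i, ∑ j, if (i ∈ S ↔ j ∈ S) then 0 else M i j := by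
  have row_mem : ∀ i ∈ S, (∑ j, if (i ∈ S ↔ j ∈ S) then 0 else M i j) = ∑ j ∈ Sᶜ, M i j := by
    intro i hi
    simp [hi, sum_ite, filter_not, compl_eq_univ_sdiff]
  have row_compl : ∀ i ∈ Sᶜ, (∑ j, if (i ∈ S ↔ j ∈ S) then 0 else M i j) = ∑ j ∈ S, M i j := by
    intro i hi
    simp_all [sum_ite]
  rw [← sum_add_sum_compl S, sum_congr rfl row_mem, sum_congr rfl row_compl, cutWeight]
  simp only [sum_add_distrib]
  rw [sum_comm (s := S)]

theorem sum_sq_mul_cutWeight_le_dirichletForm {M : Matrix ι ι ℝ} (hM : ∀ i j, 0 ≤ M i j)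
    {v : ℕ → ℝ} (hv : Monotone v) (r : ι → ℕ) (N : ℕ) :
    ∑ l ∈ range N, (v (l + 1) - v l) ^ 2 * cutWeight M {i | r i ≤ l}
      ≤ dirichletForm M (v ∘ r) := by
  simp only [cutWeight_eq_sum_ite, mem_filter, mem_univ, true_and, mul_sum, dirichletForm]
  rw [sum_comm]
  refine sum_le_sum fun i _ => ?_
  rw [sum_comm]
  refine sum_le_sum fun j _ => ?_
  calc ∑ l ∈ range N, (v (l + 1) - v l) ^ 2 * (if (r i ≤ l ↔ r j ≤ l) then 0 else M i j)
      = M i j * ∑ l ∈ range N, (if (r i ≤ l ↔ r j ≤ l) then 0 else (v (l + 1) - v l) ^ 2) := by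
        rw [mul_sum]
        exact sum_congr rfl fun l _ => by split_ifs <;> ring
    _ ≤ M i j * (v (r i) - v (r j)) ^ 2 :=
        mul_le_mul_of_nonneg_left (sum_ite_sq_sub_le_sq_sub hv _ _ _) (hM i j)

theorem cutWeight_transpose_mul_self {κ : Type*} [Fintype κ] (A : Matrix κ ι ℝ) (S : Finset ι) :
    cutWeight (Aᵀ * A) S = 2 * ∑ k, (∑ i ∈ S, A k i) * ∑ j ∈ Sᶜ, A k j := by
  calc cutWeight (Aᵀ * A) S = 2 * ∑ i ∈ S, ∑ j ∈ Sᶜ, ∑ k, A k i * A k j := by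
        simp only [cutWeight, mul_apply, transpose_apply, mul_sum, two_mul, ← sum_add_distrib]
        simp only [mul_comm]
    _ = 2 * ∑ i ∈ S, ∑ k, ∑ j ∈ Sᶜ, A k i * A k j := by
        simp only [sum_comm (s := Sᶜ)]
    _ = 2 * ∑ k, (∑ i ∈ S, A k i) * ∑ j ∈ Sᶜ, A k j := by
        rw [sum_comm]
        simp only [sum_mul_sum]

/-- Row `k` splits as `s + t = 1` with `s, t ≥ η`; the larger of the two is at least `1/2`, so
`2 s t ≥ η`. -/
theorem le_cutWeight_transpose_mul_self {A : Matrix ι ι ℝ} (hA : A ∈ rowStochastic ℝ ι)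
    {S : Finset ι} {k : ι} {η : ℝ} (hS : η ≤ ∑ i ∈ S, A k i) (hSc : η ≤ ∑ j ∈ Sᶜ, A k j) :
    η ≤ cutWeight (Aᵀ * A) S := by
  have hsum : ∑ i ∈ S, A k i + ∑ j ∈ Sᶜ, A k j = 1 := by
    rw [sum_add_sum_compl, sum_row_of_mem_rowStochastic hA]
  have row_nonneg : ∀ k T, 0 ≤ ∑ i ∈ T, A k i := fun k T =>
    sum_nonneg fun i _ => nonneg_of_mem_rowStochastic hA
  have hk : (∑ i ∈ S, A k i) * ∑ j ∈ Sᶜ, A k j ≤ ∑ k, (∑ i ∈ S, A k i) * ∑ j ∈ Sᶜ, A k j :=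
    single_le_sum (fun k _ => mul_nonneg (row_nonneg k _) (row_nonneg k _)) (mem_univ k)
  rw [cutWeight_transpose_mul_self]
  nlinarith [row_nonneg k S, row_nonneg k Sᶜ]

theorem le_cutWeight_of_reflTransGen {E : ι → ι → Prop} (hE_refl : ∀ i, E i i)
    (hE_conn : ∀ i j, Relation.ReflTransGen E i j) {A : Matrix ι ι ℝ}
    (hA : A ∈ rowStochastic ℝ ι) {η : ℝ} (hη : ∀ i j, E i j → η ≤ A i j)
    {S : Finset ι} (hS : S.Nonempty) (hSc : Sᶜ.Nonempty) :
    η ≤ cutWeight (Aᵀ * A) S := by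
  obtain ⟨i, hi⟩ := hS
  obtain ⟨j, hj⟩ := hSc
  obtain ⟨a, b, ha, hb, hab⟩ :=
    (hE_conn i j).exists_rel_across (p := (· ∈ S)) hi (mem_compl.1 hj)
  have entry_le : ∀ {T : Finset ι} {c}, c ∈ T → A a c ≤ ∑ c ∈ T, A a c := fun hc =>
    single_le_sum (f := A a) (fun _ _ => nonneg_of_mem_rowStochastic hA) hc
  exact le_cutWeight_transpose_mul_self hA ((hη a a (hE_refl a)).trans (entry_le ha))
    ((hη a b hab).trans (entry_le (mem_compl.2 hb)))

end Cuts

theorem mul_sum_sq_le_dirichletForm {n : ℕ} {M : Matrix (Fin n) (Fin n) ℝ}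
    (hM : ∀ i j, 0 ≤ M i j) {c : ℝ} (hc : 0 ≤ c)
    (hcut : ∀ S : Finset (Fin n), S.Nonempty → Sᶜ.Nonempty → c ≤ cutWeight M S)
    {y : Fin n → ℝ} (hy : ∑ i, y i = 0) :
    c * ∑ i, y i ^ 2 ≤ n * (n - 1) / 4 * dirichletForm M y := by
  cases n with
  | zero => simp [dirichletForm]
  | succ m =>
  -- `v` lists the values of `y` in increasing order (constant past index `m`) and `r i` is the
  -- rank of `i`, so that `y = v ∘ r` and the `l`-th cut holds the `l + 1` smallest entries.
  set σ := Tuple.sort y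
  set v : ℕ → ℝ := fun k => y (σ (Fin.clamp k m))
  set r : Fin (m + 1) → ℕ := fun i => σ.symm i
  have hv : Monotone v := (Tuple.monotone_sort y).comp Fin.clamp_monotone
  have hvr : v ∘ r = y := by
    funext i
    simp [v, r, Fin.clamp, Nat.min_eq_left (Nat.le_of_lt_succ (σ.symm i).isLt)]
  have hrange : ∀ i, v 0 ≤ y i ∧ y i ≤ v m := fun i => by
    rw [← hvr]
    exact ⟨hv (Nat.zero_le _), hv (Nat.le_of_lt_succ (σ.symm i).isLt)⟩
  have hcuts : ∀ l ∈ range m, c ≤ cutWeight M {i | r i ≤ l} := by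
    intro l hl
    refine hcut _ ⟨σ 0, by simp [r]⟩ ⟨σ (Fin.last m), ?_⟩
    simpa [r] using hl
  have spread : (v m - v 0) ^ 2 ≤ m * ∑ l ∈ range m, (v (l + 1) - v l) ^ 2 := by
    have := sq_sum_le_card_mul_sum_sq (s := range m) (f := fun l => v (l + 1) - v l)
    rwa [sum_range_sub, card_range] at this
  have gaps : c * ∑ l ∈ range m, (v (l + 1) - v l) ^ 2 ≤ dirichletForm M y := by
    rw [← hvr, mul_sum]
    refine le_trans (sum_le_sum fun l hl => ?_) (sum_sq_mul_cutWeight_le_dirichletForm hM hv r m)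
    rw [mul_comm]
    exact mul_le_mul_of_nonneg_left (hcuts l hl) (sq_nonneg _)
  have energy :=
    sum_sq_le_card_mul_sq_sub_div_four hy (fun i => (hrange i).1) (fun i => (hrange i).2)
  rw [Fintype.card_fin] at energy
  calc c * ∑ i, y i ^ 2 ≤ c * ((m + 1) * (v m - v 0) ^ 2 / 4) := by
        exact_mod_cast mul_le_mul_of_nonneg_left energy hc
    _ ≤ c * ((m + 1) * (m * ∑ l ∈ range m, (v (l + 1) - v l) ^ 2) / 4) := by gcongr
    _ = (m + 1) * m / 4 * (c * ∑ l ∈ range m, (v (l + 1) - v l) ^ 2) := by ring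
    _ ≤ ((m + 1 : ℕ) : ℝ) * ((m + 1 : ℕ) - 1) / 4 * dirichletForm M y := by
        push_cast
        rw [add_sub_cancel_right]
        exact mul_le_mul_of_nonneg_left gaps (by positivity)

theorem sum_mulVec_sq_le_of_sum_eq_zero {n : ℕ} {A : Matrix (Fin n) (Fin n) ℝ}
    (hA : A ∈ doublyStochastic ℝ (Fin n)) {η : ℝ} (hη : 0 ≤ η)
    (hcut : ∀ S : Finset (Fin n), S.Nonempty → Sᶜ.Nonempty → η ≤ cutWeight (Aᵀ * A) S)
    {y : Fin n → ℝ} (hy : ∑ i, y i = 0) :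
    ∑ i, (A *ᵥ y) i ^ 2 ≤ (1 - η / (2 * n ^ 2)) * ∑ i, y i ^ 2 := by
  have hM : ∀ i j, 0 ≤ (Aᵀ * A) i j := fun _ _ =>
    nonneg_of_mem_doublyStochastic (mul_mem (transpose_mem_doublyStochastic_iff.2 hA) hA)
  have poincare := mul_sum_sq_le_dirichletForm hM hη hcut hy
  have hD := dirichletForm_nonneg hM y
  have decay : η / (2 * n ^ 2) * ∑ i, y i ^ 2 ≤ dirichletForm (Aᵀ * A) y / 2 := by
    rcases n.eq_zero_or_pos with rfl | hn
    · rw [Nat.cast_zero, zero_pow two_ne_zero, mul_zero, div_zero, zero_mul]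
      exact div_nonneg hD zero_le_two
    have hn' : (1 : ℝ) ≤ n := by exact_mod_cast hn
    rw [div_mul_eq_mul_div, div_le_div_iff₀ (by positivity) two_pos]
    nlinarith
  rw [sum_mulVec_sq_eq_sub_dirichletForm hA]
  linarith

theorem consensus_contraction_general
    (n : ℕ) (hn : 0 < n)
    (E : Fin n → Fin n → Prop)
    (hE_refl : ∀ i, E i i)
    (hE_conn : ∀ i j, Relation.ReflTransGen E i j)
    (A : Matrix (Fin n) (Fin n) ℝ)
    (hA_nonneg : ∀ i j, 0 ≤ A i j)
    (hA_row : ∀ i, ∑ j, A i j = 1)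
    (hA_col : ∀ j, ∑ i, A i j = 1)
    (hA_pos : ∀ i j, E i j → 0 < A i j ∧ 0 < A j i)
    (η : ℝ)
    (hη : IsLeast {a : ℝ | 0 < a ∧ ∃ i j, A i j = a} η)
    (x : ℕ → Fin n → ℝ)
    (hx : ∀ t, x (t + 1) = A.mulVec (x t))
    (xbar : ℝ) (hxbar : xbar = (∑ j, x 0 j) / n)
    (Esq : ℕ → ℝ) (hEsq : ∀ t, Esq t = ∑ i, (x t i - xbar) ^ 2) :
    ∀ t : ℕ, Esq t ≤ (1 - η / (2 * n ^ 2)) ^ t * Esq 0 := by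
  have hA : A ∈ doublyStochastic ℝ (Fin n) :=
    mem_doublyStochastic_iff_sum.2 ⟨hA_nonneg, hA_row, hA_col⟩
  have hcut : ∀ S : Finset (Fin n), S.Nonempty → Sᶜ.Nonempty → η ≤ cutWeight (Aᵀ * A) S :=
    fun _ hS hSc => le_cutWeight_of_reflTransGen hE_refl hE_conn
      (mem_doublyStochastic_iff_mem_rowStochastic_and_mem_colStochastic.1 hA).1
      (fun i j hij => hη.2 ⟨(hA_pos i j hij).1, i, j, rfl⟩) hS hSc
  have hrate : 0 ≤ 1 - η / (2 * n ^ 2) := by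
    obtain ⟨-, i, j, hij⟩ := hη.1
    have hη_le : η ≤ 1 := hij ▸ le_one_of_mem_doublyStochastic hA
    have hn' : (1 : ℝ) ≤ n := by exact_mod_cast hn
    rw [sub_nonneg, div_le_one (by positivity)]
    nlinarith
  set e : ℕ → Fin n → ℝ := fun t => x t - xbar • 1
  have he_succ : ∀ t, e (t + 1) = A *ᵥ e t := fun t => by
    simp only [e, hx, mulVec_sub, mulVec_smul, mulVec_one_of_mem_doublyStochastic hA]
  have he_sum : ∀ t, ∑ i, e t i = 0 := by
    intro t
    induction t with
    | zero =>
      simp only [e, hxbar, Pi.sub_apply, Pi.smul_apply, Pi.one_apply, smul_eq_mul, mul_one,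
        sum_sub_distrib, sum_const, card_univ, Fintype.card_fin, nsmul_eq_mul]
      field_simp
      ring
    | succ t ih => rw [he_succ, sum_mulVec_of_mem_doublyStochastic hA, ih]
  have hEsq_e : ∀ t, Esq t = ∑ i, e t i ^ 2 := fun t => by simp [hEsq, e]
  refine fun t => le_geom hrate t fun k _ => ?_
  rw [hEsq_e, hEsq_e, he_succ]
  exact sum_mulVec_sq_le_of_sum_eq_zero hA hη.1.1.le hcut (he_sum k)

/-- Convergence time of the consensus iteration: with `η` the smallest
positive entry of the doubly stochastic matrix `A`, the squared error
`E(t) = ‖x(t) - x̄ 1‖₂²` contracts as `E(t) ≤ (1 - η/(2n²))ᵗ E(0)`. -/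
theorem consensus_contraction
    (n : ℕ) (hn : 0 < n)
    (E : Fin n → Fin n → Prop)
    (hE_symm : ∀ i j, E i j → E j i)
    (hE_refl : ∀ i, E i i)
    (hE_conn : ∀ i j, Relation.ReflTransGen E i j)
    (A : Matrix (Fin n) (Fin n) ℝ)
    (hA_nonneg : ∀ i j, 0 ≤ A i j)
    (hA_row : ∀ i, ∑ j, A i j = 1)
    (hA_col : ∀ j, ∑ i, A i j = 1)
    (hA_pos : ∀ i j, E i j → 0 < A i j ∧ 0 < A j i)
    (η : ℝ)
    (hη : IsLeast {a : ℝ | 0 < a ∧ ∃ i j, A i j = a} η)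
    (x : ℕ → Fin n → ℝ)
    (hx : ∀ t, x (t + 1) = A.mulVec (x t))
    (xbar : ℝ) (hxbar : xbar = (∑ j, x 0 j) / n)
    (Esq : ℕ → ℝ) (hEsq : ∀ t, Esq t = ∑ i, (x t i - xbar) ^ 2) :
    ∀ t : ℕ, Esq t ≤ (1 - η / (2 * n ^ 2)) ^ t * Esq 0 :=
  consensus_contraction_general n hn E hE_refl hE_conn A hA_nonneg hA_row hA_col hA_pos η hη x hx
    xbar hxbar Esq hEsq
end

section
/- Let G = ({1,...,n}, E) be a connected undirected graph in which every node is its own neighbor, and let A = [a_ij] be an n×n doubly stochastic matrix with a_ij > 0 and a_ji > 0 whenever (i,j) ∈ E, and let η = min{ a_ij : a_ij > 0 }. If x(t+1) = A x(t) and E(t) = ||x(t) − x̄ 1||₂², then for every ε ∈ (0,1) and every integer t ≥ (2n²/η) · ln(1/ε), one has E(t) ≤ ε · E(0). -/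
open Finset

namespace CA

lemma exists_crossing {α : Type*} {E : α → α → Prop} {T : Set α} {a b : α}
    (h : Relation.ReflTransGen E a b) : a ∈ T → b ∉ T →
    ∃ u v, u ∈ T ∧ v ∉ T ∧ E u v := by
  induction h with
  | refl => intro ha hb; exact absurd ha hb
  | @tail b' c hab hbc ih =>
    intro ha hc
    by_cases hb : b' ∈ T
    · exact ⟨b', c, hb, hc, hbc⟩
    · exact ih ha hb

lemma sq_sum_ge_sum_sq (s : Finset ℕ) (f : ℕ → ℝ) (hf : ∀ k, 0 ≤ f k) :
    ∑ k ∈ s, (f k) ^ 2 ≤ (∑ k ∈ s, f k) ^ 2 := by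
  have h : ∀ k ∈ s, (f k)^2 ≤ f k * ∑ j ∈ s, f j := by
    intro k hk
    have h1 : f k ≤ ∑ j ∈ s, f j := Finset.single_le_sum (fun j _ => hf j) hk
    have := mul_le_mul_of_nonneg_left h1 (hf k)
    simpa [sq] using this
  calc ∑ k ∈ s, (f k)^2 ≤ ∑ k ∈ s, f k * ∑ j ∈ s, f j := Finset.sum_le_sum h
    _ = (∑ k ∈ s, f k)^2 := by rw [← Finset.sum_mul, sq]

lemma quad_expand {n : ℕ} (W : Matrix (Fin n) (Fin n) ℝ)
    (hrow : ∀ i, ∑ j, W i j = 1) (hcol : ∀ j, ∑ i, W i j = 1) (u : Fin n → ℝ) :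
    ∑ i, ∑ j, W i j * (u i - u j) ^ 2
      = 2 * ((∑ i, (u i) ^ 2) - ∑ i, ∑ j, W i j * (u i * u j)) := by
  have e1 : ∑ i, ∑ j, W i j * (u i)^2 = ∑ i, (u i)^2 := by
    refine Finset.sum_congr rfl fun i _ => ?_
    rw [← Finset.sum_mul, hrow, one_mul]
  have e2 : ∑ i, ∑ j, W i j * (u j)^2 = ∑ i, (u i)^2 := by
    rw [Finset.sum_comm]
    refine Finset.sum_congr rfl fun j _ => ?_
    rw [← Finset.sum_mul, hcol, one_mul]
  have expand : ∀ i j, W i j * (u i - u j)^2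
      = W i j * (u i)^2 + W i j * (u j)^2 - 2 * (W i j * (u i * u j)) := by
    intro i j; ring
  calc ∑ i, ∑ j, W i j * (u i - u j)^2
      = ∑ i, ∑ j, (W i j * (u i)^2 + W i j * (u j)^2 - 2 * (W i j * (u i * u j))) := by
        exact Finset.sum_congr rfl fun i _ => Finset.sum_congr rfl fun j _ => expand i j
    _ = (∑ i, ∑ j, W i j * (u i)^2) + (∑ i, ∑ j, W i j * (u j)^2)
        - 2 * (∑ i, ∑ j, W i j * (u i * u j)) := by
        simp [Finset.sum_sub_distrib, Finset.sum_add_distrib, Finset.mul_sum]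
    _ = 2 * ((∑ i, (u i)^2) - ∑ i, ∑ j, W i j * (u i * u j)) := by rw [e1, e2]; ring

lemma mulVec_sq_sum {n : ℕ} (A : Matrix (Fin n) (Fin n) ℝ) (u : Fin n → ℝ) :
    ∑ i, (A.mulVec u i) ^ 2 = ∑ i, ∑ j, (∑ m, A m i * A m j) * (u i * u j) := by
  have h : ∀ m, (A.mulVec u m)^2 = ∑ i, ∑ j, (A m i * u i) * (A m j * u j) := by
    intro m
    simp only [Matrix.mulVec, dotProduct, sq]
    rw [Finset.sum_mul_sum]
  rw [Finset.sum_congr rfl fun m _ => h m]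
  rw [Finset.sum_comm]
  refine Finset.sum_congr rfl fun i _ => ?_
  rw [Finset.sum_comm]
  refine Finset.sum_congr rfl fun j _ => ?_
  rw [Finset.sum_mul]
  exact Finset.sum_congr rfl fun m _ => by ring

lemma cut_lower {n : ℕ}
    (E : Fin n → Fin n → Prop)
    (hE_refl : ∀ i, E i i)
    (hE_conn : ∀ i j, Relation.ReflTransGen E i j)
    (A : Matrix (Fin n) (Fin n) ℝ)
    (hA_nonneg : ∀ i j, 0 ≤ A i j)
    (hA_row : ∀ i, ∑ j, A i j = 1)
    (hA_pos : ∀ i j, E i j → 0 < A i j ∧ 0 < A j i)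
    (η : ℝ)
    (hη : IsLeast {a : ℝ | 0 < a ∧ ∃ i j, A i j = a} η)
    (σ : Equiv.Perm (Fin n)) (S : Finset (Fin n))
    (hS1 : S.Nonempty) (hS2 : Sᶜ.Nonempty) :
    η / 2 ≤ ∑ i ∈ S, ∑ j ∈ Sᶜ, (∑ m, A m (σ i) * A m (σ j)) := by
  have hηle : ∀ i j, 0 < A i j → η ≤ A i j := fun i j h => hη.2 ⟨h, i, j, rfl⟩
  set s : Fin n → ℝ := fun m => ∑ i ∈ S, A m (σ i) with hs
  have hsum1 : ∀ m, ∑ j ∈ Sᶜ, A m (σ j) = 1 - s m := by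
    intro m
    have h2 : s m + ∑ j ∈ Sᶜ, A m (σ j) = ∑ j, A m (σ j) := Finset.sum_add_sum_compl S _
    have h3 : ∑ j, A m (σ j) = 1 := by rw [Equiv.sum_comp σ (fun j => A m j)]; exact hA_row m
    linarith [h2, h3]
  have key : ∑ i ∈ S, ∑ j ∈ Sᶜ, (∑ m, A m (σ i) * A m (σ j)) = ∑ m, s m * (1 - s m) := by
    have step1 : ∀ i, ∑ j ∈ Sᶜ, (∑ m, A m (σ i) * A m (σ j))
        = ∑ m, A m (σ i) * (1 - s m) := by
      intro i
      rw [Finset.sum_comm]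
      exact Finset.sum_congr rfl fun m _ => by rw [← Finset.mul_sum, hsum1]
    rw [Finset.sum_congr rfl fun i _ => step1 i, Finset.sum_comm]
    exact Finset.sum_congr rfl fun m _ => by rw [← Finset.sum_mul]
  rw [key]
  have hs01 : ∀ m, 0 ≤ s m ∧ s m ≤ 1 := by
    intro m
    constructor
    · exact Finset.sum_nonneg fun i _ => hA_nonneg _ _
    · have h5 := hsum1 m
      have h4 : 0 ≤ ∑ j ∈ Sᶜ, A m (σ j) := Finset.sum_nonneg fun j _ => hA_nonneg _ _
      linarith
  obtain ⟨a, ha⟩ := hS1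
  obtain ⟨b, hb⟩ := hS2
  have hbS : b ∉ S := Finset.mem_compl.mp hb
  have hcross : ∃ u v, (σ.symm u ∈ S) ∧ ¬(σ.symm v ∈ S) ∧ E u v := by
    refine exists_crossing (T := {c | σ.symm c ∈ S}) (hE_conn (σ a) (σ b)) ?_ ?_
    · simpa using ha
    · simpa using hbS
  obtain ⟨v', v, hu, hv, huv⟩ := hcross
  have hAvu : η ≤ A v v' := hηle _ _ (hA_pos v' v huv).2
  have hAvv : η ≤ A v v := hηle _ _ (hA_pos v v (hE_refl v)).1
  have hη1 : η ≤ s v := by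
    calc η ≤ A v v' := hAvu
      _ = A v (σ (σ.symm v')) := by rw [Equiv.apply_symm_apply]
      _ ≤ s v := Finset.single_le_sum (f := fun i => A v (σ i))
          (fun i _ => hA_nonneg _ _) hu
  have hη2 : η ≤ 1 - s v := by
    rw [← hsum1 v]
    calc η ≤ A v v := hAvv
      _ = A v (σ (σ.symm v)) := by rw [Equiv.apply_symm_apply]
      _ ≤ ∑ j ∈ Sᶜ, A v (σ j) := Finset.single_le_sum (f := fun j => A v (σ j))
          (fun j _ => hA_nonneg _ _) (Finset.mem_compl.mpr hv)
  have hterm : η / 2 ≤ s v * (1 - s v) := by nlinarith [hs01 v]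
  calc η / 2 ≤ s v * (1 - s v) := hterm
    _ ≤ ∑ m, s m * (1 - s m) :=
      Finset.single_le_sum (f := fun m => s m * (1 - s m))
        (fun m _ => mul_nonneg (hs01 m).1 (by linarith [(hs01 m).2])) (Finset.mem_univ v)

lemma contraction_step {n : ℕ} (hn : 2 ≤ n)
    (E : Fin n → Fin n → Prop)
    (hE_refl : ∀ i, E i i)
    (hE_conn : ∀ i j, Relation.ReflTransGen E i j)
    (A : Matrix (Fin n) (Fin n) ℝ)
    (hA_nonneg : ∀ i j, 0 ≤ A i j)
    (hA_row : ∀ i, ∑ j, A i j = 1)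
    (hA_col : ∀ j, ∑ i, A i j = 1)
    (hA_pos : ∀ i j, E i j → 0 < A i j ∧ 0 < A j i)
    (η : ℝ)
    (hη : IsLeast {a : ℝ | 0 < a ∧ ∃ i j, A i j = a} η)
    (u : Fin n → ℝ) (hmean : ∑ i, u i = 0) :
    ∑ i, (A.mulVec u i) ^ 2 ≤ (1 - η / (2 * (n : ℝ) ^ 2)) * ∑ i, (u i) ^ 2 := by
  have hη0 : 0 < η := hη.1.1
  set W : Matrix (Fin n) (Fin n) ℝ := fun i j => ∑ m, A m i * A m j with hW
  have hWval : ∀ i j, W i j = ∑ m, A m i * A m j := fun i j => rfl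
  have hWnn : ∀ i j, 0 ≤ W i j :=
    fun i j => Finset.sum_nonneg fun m _ => mul_nonneg (hA_nonneg m i) (hA_nonneg m j)
  have hWrow : ∀ i, ∑ j, W i j = 1 := by
    intro i
    rw [show (∑ j, W i j) = ∑ j, ∑ m, A m i * A m j from rfl, Finset.sum_comm]
    calc ∑ m, ∑ j, A m i * A m j = ∑ m, A m i * ∑ j, A m j := by
          exact Finset.sum_congr rfl fun m _ => (Finset.mul_sum _ _ _).symm
      _ = ∑ m, A m i := by simp [hA_row]
      _ = 1 := hA_col i
  have hWcol : ∀ j, ∑ i, W i j = 1 := by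
    intro j
    rw [show (∑ i, W i j) = ∑ i, ∑ m, A m i * A m j from rfl, Finset.sum_comm]
    calc ∑ m, ∑ i, A m i * A m j = ∑ m, (∑ i, A m i) * A m j := by
          exact Finset.sum_congr rfl fun m _ => (Finset.sum_mul _ _ _).symm
      _ = ∑ m, A m j := by simp [hA_row]
      _ = 1 := hA_col j
  -- sorting
  set σ : Equiv.Perm (Fin n) := Tuple.sort u with hσ
  set z : Fin n → ℝ := u ∘ σ with hzdef
  have hzmono : Monotone z := Tuple.monotone_sort u
  have hn1 : n - 1 < n := by omega
  set Z : ℕ → ℝ := fun k => z ⟨min k (n-1), lt_of_le_of_lt (min_le_right _ _) hn1⟩ with hZ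
  have hZv : ∀ i : Fin n, Z i.val = z i := by
    intro i
    have h2 : min i.val (n-1) = i.val := by have := i.isLt; omega
    simp only [hZ]
    congr 1
    exact Fin.ext (by simpa using h2)
  set d : ℕ → ℝ := fun k => Z (k+1) - Z k with hd
  have hdnn : ∀ k, 0 ≤ d k := by
    intro k
    have h3 : Z k ≤ Z (k+1) := hzmono (by simp only [Fin.mk_le_mk]; omega)
    simp only [hd]; linarith
  have htel : ∀ a b : ℕ, a ≤ b → ∑ k ∈ Finset.Ico a b, d k = Z b - Z a := by
    intro a b hab
    rw [Finset.sum_Ico_eq_sub _ hab, Finset.sum_range_sub (f := Z), Finset.sum_range_sub (f := Z)]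
    ring
  have hpair : ∀ i j : Fin n, ∑ k ∈ Finset.Ico (min i.val j.val) (max i.val j.val), (d k)^2
      ≤ (z i - z j)^2 := by
    intro i j
    rcases le_total i j with hij | hij
    · have hij' : i.val ≤ j.val := hij
      have hmin : min i.val j.val = i.val := by omega
      have hmax : max i.val j.val = j.val := by omega
      rw [hmin, hmax]
      have h1 := sq_sum_ge_sum_sq (Finset.Ico i.val j.val) d hdnn
      rw [htel _ _ hij', hZv, hZv] at h1
      calc ∑ k ∈ Finset.Ico i.val j.val, (d k)^2 ≤ (z j - z i)^2 := h1
        _ = (z i - z j)^2 := by ring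
    · have hij' : j.val ≤ i.val := hij
      have hmin : min i.val j.val = j.val := by omega
      have hmax : max i.val j.val = i.val := by omega
      rw [hmin, hmax]
      have h1 := sq_sum_ge_sum_sq (Finset.Ico j.val i.val) d hdnn
      rw [htel _ _ hij', hZv, hZv] at h1
      exact h1
  -- quadratic identity
  have hq := quad_expand W hWrow hWcol u
  have hmW : ∑ i, (A.mulVec u i)^2 = ∑ i, ∑ j, W i j * (u i * u j) := mulVec_sq_sum A u
  set Ds : ℝ := ∑ i, ∑ j, W (σ i) (σ j) * (z i - z j)^2 with hDsdef
  have hreidx : ∑ i, ∑ j, W i j * (u i - u j)^2 = Ds := by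
    rw [hDsdef, ← Equiv.sum_comp σ (fun i => ∑ j, W i j * (u i - u j)^2)]
    exact Finset.sum_congr rfl fun i _ =>
      (Equiv.sum_comp σ (fun j => W (σ i) j * (u (σ i) - u j)^2)).symm
  have hid : ∑ i, (A.mulVec u i)^2 = (∑ i, (u i)^2) - Ds/2 := by
    rw [hmW]; rw [hreidx] at hq; linarith
  -- cut bounds
  set F : Fin n → Fin n → ℕ → ℝ := fun i j k =>
    if k ∈ Finset.Ico (min i.val j.val) (max i.val j.val) then W (σ i) (σ j) * (d k)^2 else 0
    with hF
  have hFnn : ∀ i j k, 0 ≤ F i j k := by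
    intro i j k
    simp only [hF]
    split
    · exact mul_nonneg (hWnn _ _) (sq_nonneg _)
    · exact le_refl 0
  have hIcoSub : ∀ i j : Fin n, Finset.Ico (min i.val j.val) (max i.val j.val)
      ⊆ Finset.range (n-1) := by
    intro i j k hk
    rw [Finset.mem_Ico] at hk
    rw [Finset.mem_range]
    have h1 := i.isLt
    have h2 := j.isLt
    omega
  have hT1 : ∀ i j : Fin n,
      W (σ i) (σ j) * ∑ k ∈ Finset.Ico (min i.val j.val) (max i.val j.val), (d k)^2
      = ∑ k ∈ Finset.range (n-1), F i j k := by
    intro i j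
    have h1 : ∑ k ∈ Finset.range (n-1), F i j k
        = ∑ k ∈ Finset.range (n-1) ∩ Finset.Ico (min i.val j.val) (max i.val j.val),
            W (σ i) (σ j) * (d k)^2 := Finset.sum_ite_mem _ _ _
    rw [Finset.inter_eq_right.mpr (hIcoSub i j)] at h1
    rw [h1, Finset.mul_sum]
  have hstep : ∑ k ∈ Finset.range (n-1), ∑ i, ∑ j, F i j k ≤ Ds := by
    have h1 : ∑ i, ∑ j, ∑ k ∈ Finset.range (n-1), F i j k ≤ Ds := by
      rw [hDsdef]
      refine Finset.sum_le_sum fun i _ => Finset.sum_le_sum fun j _ => ?_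
      rw [← hT1 i j]
      exact mul_le_mul_of_nonneg_left (hpair i j) (hWnn _ _)
    have h2 : ∑ i, ∑ j, ∑ k ∈ Finset.range (n-1), F i j k
        = ∑ k ∈ Finset.range (n-1), ∑ i, ∑ j, F i j k := by
      have e1 : ∀ i : Fin n, ∑ j, ∑ k ∈ Finset.range (n-1), F i j k
          = ∑ k ∈ Finset.range (n-1), ∑ j, F i j k := fun i => Finset.sum_comm
      rw [Finset.sum_congr rfl fun i _ => e1 i]
      exact Finset.sum_comm
    rw [← h2]
    exact h1
  have hcutk : ∀ k ∈ Finset.range (n-1), η * (d k)^2 ≤ ∑ i, ∑ j, F i j k := by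
    intro k hk
    rw [Finset.mem_range] at hk
    set S : Finset (Fin n) := Finset.univ.filter (fun i : Fin n => i.val ≤ k) with hS
    have hS1 : S.Nonempty := ⟨⟨0, by omega⟩, by simp [hS]⟩
    have hS2 : Sᶜ.Nonempty := ⟨⟨n-1, hn1⟩, by simp [hS]; omega⟩
    have cut1 := cut_lower E hE_refl hE_conn A hA_nonneg hA_row hA_pos η hη σ S hS1 hS2
    have cut2 := cut_lower E hE_refl hE_conn A hA_nonneg hA_row hA_pos η hη σ Sᶜ hS2
      (by rw [compl_compl]; exact hS1)
    rw [compl_compl] at cut2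
    simp only [← hWval] at cut1 cut2
    have hFa : ∀ i ∈ S, ∀ j ∈ Sᶜ, F i j k = W (σ i) (σ j) * (d k)^2 := by
      intro i hi j hj
      rw [hS, Finset.mem_filter] at hi
      rw [Finset.mem_compl, hS, Finset.mem_filter] at hj
      simp only [hF]
      rw [if_pos]
      rw [Finset.mem_Ico]
      constructor
      · have := hi.2; omega
      · have : ¬ (j.val ≤ k) := fun h => hj ⟨Finset.mem_univ j, h⟩
        omega
    have hFb : ∀ i ∈ Sᶜ, ∀ j ∈ S, F i j k = W (σ i) (σ j) * (d k)^2 := by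
      intro i hi j hj
      rw [Finset.mem_compl, hS, Finset.mem_filter] at hi
      rw [hS, Finset.mem_filter] at hj
      simp only [hF]
      rw [if_pos]
      rw [Finset.mem_Ico]
      constructor
      · have := hj.2; omega
      · have : ¬ (i.val ≤ k) := fun h => hi ⟨Finset.mem_univ i, h⟩
        omega
    have hsplit : ∑ i, ∑ j, F i j k
        = (∑ i ∈ S, ∑ j, F i j k) + ∑ i ∈ Sᶜ, ∑ j, F i j k :=
      (Finset.sum_add_sum_compl S _).symm
    have hb1 : ∑ i ∈ S, ∑ j ∈ Sᶜ, F i j k ≤ ∑ i ∈ S, ∑ j, F i j k :=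
      Finset.sum_le_sum fun i _ =>
        Finset.sum_le_sum_of_subset_of_nonneg (Finset.subset_univ _)
          (fun j _ _ => hFnn i j k)
    have hb2 : ∑ i ∈ Sᶜ, ∑ j ∈ S, F i j k ≤ ∑ i ∈ Sᶜ, ∑ j, F i j k :=
      Finset.sum_le_sum fun i _ =>
        Finset.sum_le_sum_of_subset_of_nonneg (Finset.subset_univ _)
          (fun j _ _ => hFnn i j k)
    have he1 : ∑ i ∈ S, ∑ j ∈ Sᶜ, F i j k
        = (∑ i ∈ S, ∑ j ∈ Sᶜ, W (σ i) (σ j)) * (d k)^2 := by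
      rw [Finset.sum_mul]
      refine Finset.sum_congr rfl fun i hi => ?_
      rw [Finset.sum_mul]
      exact Finset.sum_congr rfl fun j hj => hFa i hi j hj
    have he2 : ∑ i ∈ Sᶜ, ∑ j ∈ S, F i j k
        = (∑ i ∈ Sᶜ, ∑ j ∈ S, W (σ i) (σ j)) * (d k)^2 := by
      rw [Finset.sum_mul]
      refine Finset.sum_congr rfl fun i hi => ?_
      rw [Finset.sum_mul]
      exact Finset.sum_congr rfl fun j hj => hFb i hi j hj
    have hd2 : 0 ≤ (d k)^2 := sq_nonneg _
    have hc1 : (η/2) * (d k)^2 ≤ (∑ i ∈ S, ∑ j ∈ Sᶜ, W (σ i) (σ j)) * (d k)^2 :=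
      mul_le_mul_of_nonneg_right cut1 hd2
    have hc2 : (η/2) * (d k)^2 ≤ (∑ i ∈ Sᶜ, ∑ j ∈ S, W (σ i) (σ j)) * (d k)^2 :=
      mul_le_mul_of_nonneg_right cut2 hd2
    calc η * (d k)^2 = (η/2) * (d k)^2 + (η/2) * (d k)^2 := by ring
      _ ≤ (∑ i ∈ S, ∑ j ∈ Sᶜ, W (σ i) (σ j)) * (d k)^2
          + (∑ i ∈ Sᶜ, ∑ j ∈ S, W (σ i) (σ j)) * (d k)^2 := add_le_add hc1 hc2
      _ = (∑ i ∈ S, ∑ j ∈ Sᶜ, F i j k) + ∑ i ∈ Sᶜ, ∑ j ∈ S, F i j k := by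
          rw [he1, he2]
      _ ≤ (∑ i ∈ S, ∑ j, F i j k) + ∑ i ∈ Sᶜ, ∑ j, F i j k := add_le_add hb1 hb2
      _ = ∑ i, ∑ j, F i j k := hsplit.symm
  set Sd : ℝ := ∑ k ∈ Finset.range (n-1), (d k)^2 with hSddef
  have hSdnn : 0 ≤ Sd := Finset.sum_nonneg fun k _ => sq_nonneg _
  have hDsSd : η * Sd ≤ Ds := by
    calc η * Sd = ∑ k ∈ Finset.range (n-1), η * (d k)^2 := by rw [hSddef, Finset.mul_sum]
      _ ≤ ∑ k ∈ Finset.range (n-1), ∑ i, ∑ j, F i j k := Finset.sum_le_sum hcutk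
      _ ≤ Ds := hstep
  have hDsnn : 0 ≤ Ds := le_trans (mul_nonneg hη0.le hSdnn) hDsSd
  -- relate ∑ u² to Sd
  have hzs : ∑ i, z i = 0 := by
    rw [hzdef]
    rw [show (∑ i, (u ∘ σ) i) = ∑ i, u (σ i) from rfl]
    rw [Equiv.sum_comp σ u]
    exact hmean
  set lo : Fin n := ⟨0, by omega⟩ with hlo
  set hifin : Fin n := ⟨n-1, hn1⟩ with hhi
  have hlo2 : ∀ i, z lo ≤ z i := fun i => hzmono (by simp [hlo, Fin.le_def])
  have hhi2 : ∀ i, z i ≤ z hifin := fun i => hzmono (by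
    have := i.isLt
    simp [hhi, Fin.le_def]
    omega)
  have hnR : (2:ℝ) ≤ (n:ℝ) := by exact_mod_cast hn
  have hlo0 : (n:ℝ) * z lo ≤ 0 := by
    have h1 : ∑ _i : Fin n, z lo ≤ ∑ i, z i := Finset.sum_le_sum fun i _ => hlo2 i
    rw [hzs] at h1
    simpa [Finset.sum_const, Finset.card_univ, nsmul_eq_mul] using h1
  have hhi0 : 0 ≤ (n:ℝ) * z hifin := by
    have h1 : ∑ i, z i ≤ ∑ _i : Fin n, z hifin := Finset.sum_le_sum fun i _ => hhi2 i
    rw [hzs] at h1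
    simpa [Finset.sum_const, Finset.card_univ, nsmul_eq_mul] using h1
  have hzlo : z lo ≤ 0 := by nlinarith
  have hzhi : 0 ≤ z hifin := by nlinarith
  set R : ℝ := z hifin - z lo with hR
  have hsq : ∀ i, (z i)^2 ≤ R^2 := by
    intro i
    have h1 := hlo2 i
    have h2 := hhi2 i
    apply sq_le_sq'
    · rw [hR]; linarith
    · rw [hR]; linarith
  have husum : ∑ i, (u i)^2 = ∑ i, (z i)^2 :=
    (Equiv.sum_comp σ (fun i => (u i)^2)).symm
  have hub : ∑ i, (z i)^2 ≤ (n:ℝ) * R^2 := by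
    have h1 : ∑ i, (z i)^2 ≤ ∑ _i : Fin n, R^2 := Finset.sum_le_sum fun i _ => hsq i
    simpa [Finset.sum_const, Finset.card_univ, nsmul_eq_mul] using h1
  have hCS : R^2 ≤ ((n:ℝ) - 1) * Sd := by
    have hRsum : ∑ k ∈ Finset.range (n-1), d k = R := by
      rw [Finset.range_eq_Ico, htel 0 (n-1) (by omega)]
      rw [show Z (n-1) = z hifin from hZv hifin, show Z 0 = z lo from hZv lo, hR]
    have h1 := sq_sum_le_card_mul_sum_sq (s := Finset.range (n-1)) (f := d)
    rw [hRsum, Finset.card_range] at h1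
    have hcast : ((n-1 : ℕ) : ℝ) = (n:ℝ) - 1 := by
      have : 1 ≤ n := by omega
      push_cast [this]
      ring
    rw [hcast] at h1
    exact h1
  -- final assembly
  clear_value Ds Sd R
  have hfin : η * ∑ i, (u i)^2 ≤ (n:ℝ)^2 * Ds := by
    have h1 : η * ∑ i, (u i)^2 ≤ η * ((n:ℝ) * R^2) := by
      apply mul_le_mul_of_nonneg_left _ hη0.le
      rw [husum]; exact hub
    have h2 : η * ((n:ℝ) * R^2) ≤ η * ((n:ℝ) * (((n:ℝ)-1) * Sd)) := by
      apply mul_le_mul_of_nonneg_left _ hη0.le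
      apply mul_le_mul_of_nonneg_left hCS (by linarith)
    have h3 : η * ((n:ℝ) * (((n:ℝ)-1) * Sd)) = ((n:ℝ) * ((n:ℝ)-1)) * (η * Sd) := by ring
    have hprod : (0:ℝ) ≤ (n:ℝ) * ((n:ℝ)-1) := mul_nonneg (by linarith) (by linarith)
    have h4 : ((n:ℝ) * ((n:ℝ)-1)) * (η * Sd) ≤ ((n:ℝ) * ((n:ℝ)-1)) * Ds :=
      mul_le_mul_of_nonneg_left hDsSd hprod
    have h6 : (n:ℝ) * ((n:ℝ)-1) ≤ (n:ℝ)^2 := by nlinarith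
    have h5 : ((n:ℝ) * ((n:ℝ)-1)) * Ds ≤ (n:ℝ)^2 * Ds :=
      mul_le_mul_of_nonneg_right h6 hDsnn
    linarith
  rw [hid]
  have hkey : (1 - η/(2*(n:ℝ)^2)) * (∑ i, (u i)^2) - ((∑ i, (u i)^2) - Ds/2)
      = ((n:ℝ)^2 * Ds - η * ∑ i, (u i)^2) / (2*(n:ℝ)^2) := by
    have hnz : (n:ℝ) ≠ 0 := by positivity
    field_simp
    ring
  have hnum : 0 ≤ ((n:ℝ)^2 * Ds - η * ∑ i, (u i)^2) / (2*(n:ℝ)^2) :=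
    div_nonneg (by linarith) (by positivity)
  linarith

end CA




/-- Convergence time of the consensus iteration: for every `ε ∈ (0,1)`,
after `t ≥ (2n²/η) ln(1/ε)` steps the squared error has shrunk by a factor of `ε`. -/
theorem consensus_convergence_time
    (n : ℕ) (hn : 0 < n)
    (E : Fin n → Fin n → Prop)
    (hE_symm : ∀ i j, E i j → E j i)
    (hE_refl : ∀ i, E i i)
    (hE_conn : ∀ i j, Relation.ReflTransGen E i j)
    (A : Matrix (Fin n) (Fin n) ℝ)
    (hA_nonneg : ∀ i j, 0 ≤ A i j)
    (hA_row : ∀ i, ∑ j, A i j = 1)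
    (hA_col : ∀ j, ∑ i, A i j = 1)
    (hA_pos : ∀ i j, E i j → 0 < A i j ∧ 0 < A j i)
    (η : ℝ)
    (hη : IsLeast {a : ℝ | 0 < a ∧ ∃ i j, A i j = a} η)
    (x : ℕ → Fin n → ℝ)
    (hx : ∀ t, x (t + 1) = A.mulVec (x t))
    (xbar : ℝ) (hxbar : xbar = (∑ j, x 0 j) / n)
    (Esq : ℕ → ℝ) (hEsq : ∀ t, Esq t = ∑ i, (x t i - xbar) ^ 2) :
    ∀ ε : ℝ, 0 < ε → ε < 1 →
      ∀ t : ℕ, (2 * n ^ 2 / η) * Real.log (1 / ε) ≤ (t : ℝ) →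
        Esq t ≤ ε * Esq 0 := by
  intro ε hε0 hε1 t ht
  have hη0 : 0 < η := hη.1.1
  rcases (show n = 1 ∨ 2 ≤ n by omega) with hn1 | hn2
  · -- trivial case n = 1
    subst hn1
    have hx1 : ∀ s, x s 0 = x 0 0 := by
      intro s
      induction s with
      | zero => rfl
      | succ s ih =>
        rw [hx s]
        have hA00 : A 0 0 = 1 := by
          have := hA_row 0
          rwa [Fin.sum_univ_one] at this
        simp [Matrix.mulVec, dotProduct, Fin.sum_univ_one, hA00, ih]
    have hxb : xbar = x 0 0 := by
      rw [hxbar, Fin.sum_univ_one]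
      norm_num
    have hEz : ∀ s, Esq s = 0 := by
      intro s
      rw [hEsq s, Fin.sum_univ_one, hx1 s, hxb]
      ring
    rw [hEz t, hEz 0]
    simp
  · -- main case n ≥ 2
    have hnR : (2:ℝ) ≤ (n:ℝ) := by exact_mod_cast hn2
    -- the total sum is preserved
    have hsum : ∀ s, ∑ i, x s i = ∑ i, x 0 i := by
      intro s
      induction s with
      | zero => rfl
      | succ s ih =>
        rw [hx s]
        calc ∑ i, A.mulVec (x s) i = ∑ i, ∑ j, A i j * x s j := by
              simp [Matrix.mulVec, dotProduct]
          _ = ∑ j, ∑ i, A i j * x s j := Finset.sum_comm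
          _ = ∑ j, x s j := by
              refine Finset.sum_congr rfl fun j _ => ?_
              rw [← Finset.sum_mul, hA_col, one_mul]
          _ = ∑ i, x 0 i := ih
    have hnx : (n:ℝ) * xbar = ∑ i, x 0 i := by
      rw [hxbar]
      field_simp
    have humean : ∀ s, ∑ i, (x s i - xbar) = 0 := by
      intro s
      rw [Finset.sum_sub_distrib, hsum s]
      simp [Finset.sum_const, Finset.card_univ, nsmul_eq_mul]
      linarith [hnx]
    have hustep : ∀ s, (fun i => x (s+1) i - xbar) = A.mulVec (fun j => x s j - xbar) := by
      intro s
      funext i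
      have : A.mulVec (fun j => x s j - xbar) i
          = (∑ j, A i j * x s j) - (∑ j, A i j) * xbar := by
        simp only [Matrix.mulVec, dotProduct, mul_sub, Finset.sum_sub_distrib,
          Finset.sum_mul]
      rw [this, hA_row, one_mul, hx s]
      simp [Matrix.mulVec, dotProduct]
    set c : ℝ := 1 - η / (2 * (n:ℝ)^2) with hc
    have hη1 : η ≤ 1 := by
      have hi0 : (0:ℕ) < n := by omega
      set i0 : Fin n := ⟨0, hi0⟩ with hi0def
      have hpos := (hA_pos i0 i0 (hE_refl _)).1
      have hle : η ≤ A i0 i0 := hη.2 ⟨hpos, _, _, rfl⟩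
      have hub : A i0 i0 ≤ ∑ j, A i0 j :=
        Finset.single_le_sum (f := fun j => A i0 j) (fun j _ => hA_nonneg _ _)
          (Finset.mem_univ i0)
      rw [hA_row] at hub
      linarith
    have hn2R : (0:ℝ) < 2 * (n:ℝ)^2 := by positivity
    have hc0 : 0 ≤ c := by
      rw [hc]
      have : η / (2 * (n:ℝ)^2) ≤ 1 := by
        rw [div_le_one hn2R]
        nlinarith
      linarith
    have hstepE : ∀ s, Esq (s+1) ≤ c * Esq s := by
      intro s
      rw [hEsq (s+1), hEsq s]
      have hcontr := CA.contraction_step hn2 E hE_refl hE_conn A hA_nonneg hA_row hA_col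
        hA_pos η hη (fun i => x s i - xbar) (humean s)
      calc ∑ i, (x (s+1) i - xbar)^2
          = ∑ i, (A.mulVec (fun j => x s j - xbar) i)^2 := by
            refine Finset.sum_congr rfl fun i _ => ?_
            rw [show x (s+1) i - xbar = A.mulVec (fun j => x s j - xbar) i from
              congrFun (hustep s) i]
        _ ≤ (1 - η / (2 * (n:ℝ)^2)) * ∑ i, (x s i - xbar)^2 := hcontr
        _ = c * ∑ i, (x s i - xbar)^2 := by rw [hc]
    have hE0nn : 0 ≤ Esq 0 := by
      rw [hEsq 0]
      exact Finset.sum_nonneg fun i _ => sq_nonneg _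
    have hEiter : ∀ s, Esq s ≤ c^s * Esq 0 := by
      intro s
      induction s with
      | zero => simp
      | succ s ih =>
        calc Esq (s+1) ≤ c * Esq s := hstepE s
          _ ≤ c * (c^s * Esq 0) := mul_le_mul_of_nonneg_left ih hc0
          _ = c^(s+1) * Esq 0 := by ring
    -- bound c^t by ε
    have hL : Real.log (1/ε) = - Real.log ε := by rw [one_div, Real.log_inv]
    have h7 : 2 * (n:ℝ)^2 * Real.log (1/ε) ≤ η * t := by
      rw [div_mul_eq_mul_div, div_le_iff₀ hη0] at ht
      linarith
    have hce : c ≤ Real.exp (-(η / (2 * (n:ℝ)^2))) := by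
      have := Real.add_one_le_exp (-(η / (2 * (n:ℝ)^2)))
      rw [hc]
      linarith
    have hct : c^t ≤ ε := by
      have h8 : c^t ≤ Real.exp (-(η / (2 * (n:ℝ)^2)))^t := pow_le_pow_left₀ hc0 hce t
      have h9 : Real.exp (-(η / (2 * (n:ℝ)^2)))^t
          = Real.exp ((t:ℝ) * (-(η / (2 * (n:ℝ)^2)))) := (Real.exp_nat_mul _ t).symm
      have h10 : (t:ℝ) * (-(η / (2 * (n:ℝ)^2))) ≤ Real.log ε := by
        have h11 : Real.log (1/ε) ≤ (t:ℝ) * η / (2 * (n:ℝ)^2) := by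
          rw [le_div_iff₀ hn2R]
          linarith
        have h12 : (t:ℝ) * (-(η / (2 * (n:ℝ)^2))) = -((t:ℝ) * η / (2 * (n:ℝ)^2)) := by
          ring
        rw [h12]
        linarith [hL ▸ h11]
      have h13 : Real.exp ((t:ℝ) * (-(η / (2 * (n:ℝ)^2)))) ≤ ε :=
        (Real.le_log_iff_exp_le hε0).mp h10
      calc c^t ≤ Real.exp (-(η / (2 * (n:ℝ)^2)))^t := h8
        _ = Real.exp ((t:ℝ) * (-(η / (2 * (n:ℝ)^2)))) := h9
        _ ≤ ε := h13
    calc Esq t ≤ c^t * Esq 0 := hEiter t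
      _ ≤ ε * Esq 0 := mul_le_mul_of_nonneg_right hct hE0nn
end

section
/- Let G = ({1,...,n}, E) be a connected undirected graph with n ≥ 2 in which every node is its own neighbor, let d(i) denote the number of neighbors of node i other than i itself, and let d_max = max_i d(i). Define A by a_ij = 1/(2 d_max) for j ∈ N(i), j ≠ i, a_ii = 1 − d(i)/(2 d_max), and a_ij = 0 otherwise. If x(t+1) = A x(t) and E(t) = ||x(t) − x̄ 1||₂², then for every t ≥ 0, E(t) ≤ (1 − 1/(4 n² d_max))^t · E(0). -/
/-!
With `L` the Laplacian of the graph without its self-loops, `A = 1 - L / (2 d_max)`. Since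
`L 1 = 0` and `1ᵀ L = 0`, `A` fixes the average, so the deviation `y = x - x̄ 1` has zero sum
and evolves by `A` as well. Expanding,
`‖A y‖² = ‖y‖² - ⟨y, L y⟩ / d_max + ‖L y‖² / (4 d_max²)`, and Cauchy–Schwarz over each
neighbourhood gives `‖L y‖² ≤ 2 d_max ⟨y, L y⟩`, hence `‖A y‖² ≤ ‖y‖² - ⟨y, L y⟩ / (2 d_max)`.
It remains to prove the Poincaré inequality `‖y‖² ≤ 2 n² ⟨y, L y⟩`: as `∑ y = 0`, every `y i`
has some `y j` of the opposite sign, so `y i² ≤ (y i - y j)²`, and Cauchy–Schwarz along a path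
from `i` to `j` (of length `< n`) bounds this by `n` times the sum of `(y a - y b)²` over
ordered adjacent pairs, that is by `2 n ⟨y, L y⟩`.
-/

open Finset Matrix

theorem exists_mul_nonpos_of_sum_eq_zero {ι R : Type*} [Fintype ι] [CommRing R] [LinearOrder R]
    [IsStrictOrderedRing R] {y : ι → R} (hy : ∑ j, y j = 0) (i : ι) : ∃ j, y i * y j ≤ 0 := by
  by_contra! h
  have := sum_pos (fun j _ => h j) (univ_nonempty_iff.mpr ⟨i⟩)
  rw [← mul_sum, hy, mul_zero] at this
  exact this.false

namespace SimpleGraph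

section fromRel

variable {V : Type*}

theorem reachable_fromRel_eq_reflTransGen {r : V → V → Prop} (hr : ∀ a b, r a b → r b a) :
    (fromRel r).Reachable = Relation.ReflTransGen r := by
  rw [reachable_eq_reflTransGen, ← Relation.transGen_reflGen, ← Relation.transGen_reflGen]
  congr 1
  ext a b
  simp only [Relation.reflGen_iff, fromRel_adj]
  constructor
  · rintro (h | ⟨-, h | h⟩) <;> [exact .inl h; exact .inr h; exact .inr (hr _ _ h)]
  · rintro (h | h)
    · exact .inl h
    · by_cases hab : a = b
      · exact .inl hab.symm
      · exact .inr ⟨hab, .inl h⟩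

variable [Fintype V] in
theorem card_filter_eq_degree_fromRel {r : V → V → Prop} (hr : ∀ a b, r a b → r b a)
    [DecidableRel (fromRel r).Adj] (i : V) [DecidablePred fun j => j ≠ i ∧ r i j] :
    (univ.filter fun j => j ≠ i ∧ r i j).card = (fromRel r).degree i := by
  rw [← card_neighborFinset_eq_degree, neighborFinset_eq_filter]
  congr 1
  ext j
  simp only [mem_filter, mem_univ, true_and, fromRel_adj]
  exact ⟨fun ⟨hji, h⟩ => ⟨Ne.symm hji, .inl h⟩, fun ⟨hij, h⟩ => ⟨Ne.symm hij, h.elim id (hr _ _)⟩⟩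

end fromRel

variable {V : Type*} [Fintype V] [DecidableEq V] {G : SimpleGraph V} [DecidableRel G.Adj]

theorem dotProduct_lapMatrix_mulVec (y : V → ℝ) :
    y ⬝ᵥ (G.lapMatrix ℝ *ᵥ y) = (∑ i, ∑ j, if G.Adj i j then (y i - y j) ^ 2 else 0) / 2 := by
  rw [← toLinearMap₂'_apply', lapMatrix_toLinearMap₂']

theorem lapMatrix_mulVec_apply_eq_sum_sub (y : V → ℝ) (i : V) :
    (G.lapMatrix ℝ *ᵥ y) i = ∑ j ∈ G.neighborFinset i, (y i - y j) := by
  rw [lapMatrix_mulVec_apply, sum_sub_distrib, sum_const, card_neighborFinset_eq_degree,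
    nsmul_eq_mul]

theorem sum_lapMatrix_mulVec (y : V → ℝ) : ∑ i, (G.lapMatrix ℝ *ᵥ y) i = 0 := by
  have h := dotProduct_mulVec (fun _ => (1 : ℝ)) (G.lapMatrix ℝ) y
  rw [← mulVec_transpose, (isSymm_lapMatrix ℝ G).eq, lapMatrix_mulVec_const_eq_zero,
    zero_dotProduct] at h
  simpa [dotProduct] using h

theorem lapMatrix_mulVec_sub_const (y : V → ℝ) (c : ℝ) :
    G.lapMatrix ℝ *ᵥ (y - fun _ => c) = G.lapMatrix ℝ *ᵥ y := by
  have hc : (fun _ => c) = c • fun _ : V => (1 : ℝ) := by ext; simp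
  rw [mulVec_sub, hc, mulVec_smul, lapMatrix_mulVec_const_eq_zero, smul_zero, sub_zero]

theorem one_sub_smul_lapMatrix_apply (c : ℝ) (i j : V) :
    (1 - c • G.lapMatrix ℝ) i j =
      if i = j then 1 - c * G.degree i else if G.Adj i j then c else 0 := by
  by_cases h : i = j
  · subst h
    simp [lapMatrix, degMatrix]
  · simp [lapMatrix, degMatrix, h, adjMatrix_apply]

theorem Walk.IsPath.sq_sub_le {u v : V} {p : G.Walk u v} (hp : p.IsPath) (y : V → ℝ) :
    (y u - y v) ^ 2 ≤ 2 * Fintype.card V * (y ⬝ᵥ (G.lapMatrix ℝ *ᵥ y)) := by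
  set f : ℕ → ℝ := fun k => y (p.getVert k)
  set g : V × V → ℝ := fun q => if G.Adj q.1 q.2 then (y q.1 - y q.2) ^ 2 else 0
  have htel : y u - y v = ∑ k ∈ range p.length, (f k - f (k + 1)) := by
    rw [sum_range_sub']
    simp [f]
  have hstep : ∀ k ∈ range p.length, (f k - f (k + 1)) ^ 2 = g (p.getVert k, p.getVert (k + 1)) :=
    fun k hk => by simp [f, g, p.adj_getVert_succ (mem_range.mp hk)]
  have hinj : Set.InjOn (fun k => (p.getVert k, p.getVert (k + 1))) (range p.length) :=
    fun k hk l hl hkl => hp.getVert_injOn (by simp at hk ⊢; omega) (by simp at hl ⊢; omega)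
      (congrArg Prod.fst hkl)
  have hpath : ∑ k ∈ range p.length, (f k - f (k + 1)) ^ 2 ≤ ∑ q, g q := by
    rw [sum_congr rfl hstep, ← sum_image hinj]
    exact sum_le_univ_sum_of_nonneg fun q => by positivity
  calc (y u - y v) ^ 2 ≤ p.length * ∑ k ∈ range p.length, (f k - f (k + 1)) ^ 2 := by
        have := sq_sum_le_card_mul_sum_sq (s := range p.length) (f := fun k => f k - f (k + 1))
        rwa [card_range, ← htel] at this
    _ ≤ Fintype.card V * ∑ q, g q := by
        gcongr
        exact hp.length_lt.le
    _ = 2 * Fintype.card V * (y ⬝ᵥ (G.lapMatrix ℝ *ᵥ y)) := by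
        rw [dotProduct_lapMatrix_mulVec, Fintype.sum_prod_type' (fun i j => g (i, j))]
        ring

theorem Connected.sum_sq_le_of_sum_eq_zero (hG : G.Connected) {y : V → ℝ}
    (hy : ∑ i, y i = 0) :
    ∑ i, y i ^ 2 ≤ 2 * Fintype.card V ^ 2 * (y ⬝ᵥ (G.lapMatrix ℝ *ᵥ y)) := by
  have hi : ∀ i, y i ^ 2 ≤ 2 * Fintype.card V * (y ⬝ᵥ (G.lapMatrix ℝ *ᵥ y)) := fun i => by
    obtain ⟨j, hj⟩ := exists_mul_nonpos_of_sum_eq_zero hy i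
    obtain ⟨p⟩ := hG.preconnected i j
    calc y i ^ 2 ≤ (y i - y j) ^ 2 := by nlinarith [sq_nonneg (y j)]
      _ ≤ _ := p.toPath.2.sq_sub_le y
  calc ∑ i, y i ^ 2 ≤ ∑ _i : V, 2 * Fintype.card V * (y ⬝ᵥ (G.lapMatrix ℝ *ᵥ y)) :=
        sum_le_sum fun i _ => hi i
    _ = _ := by rw [sum_const, card_univ, nsmul_eq_mul]; ring

theorem lapMatrix_mulVec_dotProduct_self_le {D : ℕ} (hD : ∀ i, G.degree i ≤ D) (y : V → ℝ) :
    (G.lapMatrix ℝ *ᵥ y) ⬝ᵥ (G.lapMatrix ℝ *ᵥ y) ≤ 2 * D * (y ⬝ᵥ (G.lapMatrix ℝ *ᵥ y)) := by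
  have hi : ∀ i, (G.lapMatrix ℝ *ᵥ y) i * (G.lapMatrix ℝ *ᵥ y) i ≤
      D * ∑ j, if G.Adj i j then (y i - y j) ^ 2 else 0 := fun i => by
    rw [← sq, lapMatrix_mulVec_apply_eq_sum_sub, ← sum_filter, ← neighborFinset_eq_filter]
    calc _ ≤ (G.neighborFinset i).card * ∑ j ∈ G.neighborFinset i, (y i - y j) ^ 2 :=
          sq_sum_le_card_mul_sum_sq
      _ ≤ D * ∑ j ∈ G.neighborFinset i, (y i - y j) ^ 2 := by
          gcongr
          rw [card_neighborFinset_eq_degree]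
          exact_mod_cast hD i
  calc _ ≤ ∑ i, D * ∑ j, if G.Adj i j then (y i - y j) ^ 2 else 0 := sum_le_sum fun i _ => hi i
    _ = _ := by rw [dotProduct_lapMatrix_mulVec, ← mul_sum]; ring

theorem Connected.dotProduct_sub_smul_lapMatrix_mulVec_le (hG : G.Connected) {D : ℕ} (hD0 : 0 < D)
    (hD : ∀ i, G.degree i ≤ D) {y : V → ℝ} (hy : ∑ i, y i = 0) :
    (y - (2 * D : ℝ)⁻¹ • (G.lapMatrix ℝ *ᵥ y)) ⬝ᵥ (y - (2 * D : ℝ)⁻¹ • (G.lapMatrix ℝ *ᵥ y)) ≤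
      (1 - 1 / (4 * Fintype.card V ^ 2 * D)) * (y ⬝ᵥ y) := by
  set L := G.lapMatrix ℝ
  set ε : ℝ := (2 * D)⁻¹
  have hε : ε * (2 * D) = 1 := inv_mul_cancel₀ (by positivity)
  have hεpos : 0 < ε := by positivity
  have hn : (0 : ℝ) < Fintype.card V := by
    have := hG.nonempty
    exact_mod_cast Fintype.card_pos
  have hR := lapMatrix_mulVec_dotProduct_self_le hD y
  have hY : y ⬝ᵥ y ≤ 2 * Fintype.card V ^ 2 * (y ⬝ᵥ (L *ᵥ y)) := by
    simpa [dotProduct, sq] using hG.sum_sq_le_of_sum_eq_zero hy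
  have hexpand : (y - ε • (L *ᵥ y)) ⬝ᵥ (y - ε • (L *ᵥ y)) =
      y ⬝ᵥ y - 2 * ε * (y ⬝ᵥ (L *ᵥ y)) + ε ^ 2 * ((L *ᵥ y) ⬝ᵥ (L *ᵥ y)) := by
    simp only [sub_dotProduct, dotProduct_sub, smul_dotProduct, dotProduct_smul, smul_eq_mul,
      dotProduct_comm (L *ᵥ y) y]
    ring
  calc _ = y ⬝ᵥ y - 2 * ε * (y ⬝ᵥ (L *ᵥ y)) + ε ^ 2 * ((L *ᵥ y) ⬝ᵥ (L *ᵥ y)) := hexpand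
    _ ≤ y ⬝ᵥ y - 2 * ε * (y ⬝ᵥ (L *ᵥ y)) + ε ^ 2 * (2 * D * (y ⬝ᵥ (L *ᵥ y))) := by gcongr
    _ = y ⬝ᵥ y - ε * (y ⬝ᵥ (L *ᵥ y)) := by linear_combination (ε * (y ⬝ᵥ (L *ᵥ y))) * hε
    _ ≤ y ⬝ᵥ y - ε * (y ⬝ᵥ y / (2 * Fintype.card V ^ 2)) := by
        gcongr
        rw [div_le_iff₀ (by positivity)]
        linarith
    _ = _ := by simp only [ε]; field_simp; ring

theorem Connected.sum_sq_sub_average_le (hG : G.Connected) {D : ℕ} (hD0 : 0 < D)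
    (hD : ∀ i, G.degree i ≤ D) {x : ℕ → V → ℝ}
    (hx : ∀ t, x (t + 1) = x t - (2 * D : ℝ)⁻¹ • (G.lapMatrix ℝ *ᵥ x t)) (t : ℕ) :
    ∑ i, (x t i - (∑ j, x 0 j) / Fintype.card V) ^ 2 ≤
      (1 - 1 / (4 * Fintype.card V ^ 2 * D)) ^ t *
        ∑ i, (x 0 i - (∑ j, x 0 j) / Fintype.card V) ^ 2 := by
  have : Nonempty V := hG.nonempty
  set m := (∑ j, x 0 j) / Fintype.card V
  set y : ℕ → V → ℝ := fun t => x t - fun _ => m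
  have hy_succ : ∀ t, y (t + 1) = y t - (2 * D : ℝ)⁻¹ • (G.lapMatrix ℝ *ᵥ y t) := fun t => by
    simp only [y]
    rw [lapMatrix_mulVec_sub_const, hx, sub_right_comm]
  have hy_sum : ∀ t, ∑ i, y t i = 0 := by
    intro t
    induction t with
    | zero =>
      simp only [y, m, Pi.sub_apply, sum_sub_distrib, sum_const, card_univ, nsmul_eq_mul]
      field_simp
      ring
    | succ t ih =>
      simp only [hy_succ, Pi.sub_apply, Pi.smul_apply, smul_eq_mul, sum_sub_distrib, ← mul_sum,
        sum_lapMatrix_mulVec, ih]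
      ring
  have hc : 0 ≤ 1 - 1 / (4 * Fintype.card V ^ 2 * D : ℝ) := by
    have : (1 : ℝ) ≤ Fintype.card V := by exact_mod_cast Fintype.card_pos
    have : (1 : ℝ) ≤ D := by exact_mod_cast hD0
    rw [sub_nonneg, div_le_one (by positivity)]
    nlinarith
  have hnorm : ∀ t, ∑ i, (x t i - m) ^ 2 = y t ⬝ᵥ y t := fun t => by simp [y, dotProduct, sq]
  refine le_geom (u := fun t => ∑ i, (x t i - m) ^ 2) hc t fun k _ => ?_
  rw [hnorm, hnorm, hy_succ]
  exact hG.dotProduct_sub_smul_lapMatrix_mulVec_le hD0 hD (hy_sum k)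

end SimpleGraph

open Classical in
theorem equal_weight_consensus_contraction_general
    (n : ℕ) (hn : 2 ≤ n)
    (E : Fin n → Fin n → Prop)
    (hE_symm : ∀ i j, E i j → E j i)
    (hE_conn : ∀ i j, Relation.ReflTransGen E i j)
    (d : Fin n → ℕ)
    (hd : ∀ i, d i = (Finset.univ.filter fun j => j ≠ i ∧ E i j).card)
    (dmax : ℕ) (hdmax : dmax = Finset.univ.sup d)
    (A : Matrix (Fin n) (Fin n) ℝ)
    (hA : ∀ i j, A i j =
      if j = i then 1 - (d i : ℝ) / (2 * (dmax : ℝ))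
      else if E i j then 1 / (2 * (dmax : ℝ)) else 0)
    (x : ℕ → Fin n → ℝ)
    (hx : ∀ t, x (t + 1) = A.mulVec (x t))
    (xbar : ℝ) (hxbar : xbar = (∑ j, x 0 j) / n)
    (Esq : ℕ → ℝ) (hEsq : ∀ t, Esq t = ∑ i, (x t i - xbar) ^ 2) :
    ∀ t : ℕ, Esq t ≤ (1 - 1 / (4 * (n : ℝ) ^ 2 * (dmax : ℝ))) ^ t * Esq 0 := by
  have : Nontrivial (Fin n) := Fin.nontrivial_iff_two_le.mpr hn
  set G := SimpleGraph.fromRel E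
  have hdeg : ∀ i, d i = G.degree i :=
    fun i => (hd i).trans (SimpleGraph.card_filter_eq_degree_fromRel hE_symm i)
  have hG : G.Connected := ⟨fun i j => by
    rw [SimpleGraph.reachable_fromRel_eq_reflTransGen hE_symm]; exact hE_conn i j⟩
  have hD : ∀ i, G.degree i ≤ dmax := fun i => hdeg i ▸ hdmax ▸ le_sup (mem_univ i)
  have hD0 : 0 < dmax := (hG.preconnected.degree_pos_of_nontrivial ⟨0, by omega⟩).trans_le (hD _)
  have hAL : A = 1 - (2 * dmax : ℝ)⁻¹ • G.lapMatrix ℝ := by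
    ext i j
    rw [hA, SimpleGraph.one_sub_smul_lapMatrix_apply]
    by_cases hij : i = j
    · subst hij
      simp [hdeg, div_eq_inv_mul]
    · have : E i j ∨ E j i ↔ E i j := ⟨(·.elim id (hE_symm _ _)), .inl⟩
      simp [hij, Ne.symm hij, this, G]
  intro t
  have := hG.sum_sq_sub_average_le hD0 hD (x := x)
    (fun t => by rw [hx, hAL, sub_mulVec, one_mulVec, smul_mulVec]) t
  simpa only [hEsq, hxbar, Fintype.card_fin] using this

open Classical in
/-- For the weight matrix with `ε = 1/(2 d_max)`, the squared error of the
consensus iteration contracts as `E(t) ≤ (1 - 1/(4 n² d_max))ᵗ E(0)`. -/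
theorem equal_weight_consensus_contraction
    (n : ℕ) (hn : 2 ≤ n)
    (E : Fin n → Fin n → Prop)
    (hE_symm : ∀ i j, E i j → E j i)
    (hE_refl : ∀ i, E i i)
    (hE_conn : ∀ i j, Relation.ReflTransGen E i j)
    (d : Fin n → ℕ)
    (hd : ∀ i, d i = (Finset.univ.filter fun j => j ≠ i ∧ E i j).card)
    (dmax : ℕ) (hdmax : dmax = Finset.univ.sup d)
    (A : Matrix (Fin n) (Fin n) ℝ)
    (hA : ∀ i j, A i j =
      if j = i then 1 - (d i : ℝ) / (2 * (dmax : ℝ))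
      else if E i j then 1 / (2 * (dmax : ℝ)) else 0)
    (x : ℕ → Fin n → ℝ)
    (hx : ∀ t, x (t + 1) = A.mulVec (x t))
    (xbar : ℝ) (hxbar : xbar = (∑ j, x 0 j) / n)
    (Esq : ℕ → ℝ) (hEsq : ∀ t, Esq t = ∑ i, (x t i - xbar) ^ 2) :
    ∀ t : ℕ, Esq t ≤ (1 - 1 / (4 * (n : ℝ) ^ 2 * (dmax : ℝ))) ^ t * Esq 0 :=
  equal_weight_consensus_contraction_general n hn E hE_symm hE_conn d hd dmax hdmax A hA x hx xbar
    hxbar Esq hEsq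
end

section
/- Let G = ({1,...,n}, E) be a connected undirected graph in which every node is its own neighbor, and let A be the lazy Metropolis matrix of G, defined by a_ij = 1/(2 max(d(i), d(j))) for j ∈ N(i), j ≠ i, a_ii = 1 − ∑_{j ∈ N(i), j ≠ i} a_ij, and a_ij = 0 otherwise. If x(t+1) = A x(t), then for every t ≥ 0, ||x(t) − x̄ 1||₂² ≤ (1 − 1/(37 n²))^t · ||x(0) − x̄ 1||₂². -/
/-!
Write `A = (1 + B) / 2` with `B = 2A - 1` doubly stochastic. Then `‖By‖ ≤ ‖y‖`, which gives
`‖Ay‖² ≤ ⟪y, Ay⟫ = ‖y‖² - 𝓔(y) / 2`, where `𝓔(y) = ∑ W_ab (y_a - y_b)²` is the Dirichlet form of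
the Metropolis weights `W`. For mean-zero `y` a Poincaré inequality `‖y‖² ≤ 6 n² 𝓔(y)` holds:
join any two vertices by a shortest path and apply Cauchy–Schwarz with the weights `1 / W_ab`
along it. Their sum is `O(n)` because the degrees along a shortest path add up to at most `3n`,
vertices three or more steps apart having disjoint closed neighbourhoods. So every step contracts
the deviation from the (preserved) mean by `1 - 1 / (12 n²) ≤ 1 - 1 / (37 n²)`.
-/

open Finset Matrix

section DoublyStochastic

variable {ι : Type*} [Fintype ι] [DecidableEq ι] {A : Matrix ι ι ℝ}

theorem sum_sq_mulVec_le_of_mem_doublyStochastic (hA : A ∈ doublyStochastic ℝ ι) (y : ι → ℝ) :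
    ∑ i, (A *ᵥ y) i ^ 2 ≤ ∑ i, y i ^ 2 :=
  calc ∑ i, (A *ᵥ y) i ^ 2 ≤ ∑ i, ∑ j, A i j * y j ^ 2 := by
        refine sum_le_sum fun i _ => ?_
        have := sum_sq_le_sum_mul_sum_of_sq_le_mul univ (r := fun j => A i j * y j)
          (fun j _ => nonneg_of_mem_doublyStochastic hA (i := i) (j := j))
          (fun j _ => mul_nonneg (nonneg_of_mem_doublyStochastic hA) (sq_nonneg (y j)))
          (fun j _ => le_of_eq (by ring))
        rwa [sum_row_of_mem_doublyStochastic hA, one_mul] at this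
    _ = ∑ j, y j ^ 2 := by
        rw [sum_comm]
        simp_rw [← sum_mul, sum_col_of_mem_doublyStochastic hA, one_mul]

theorem dotProduct_mulVec_eq_sub_sum_mul_sq_sub (hA : A ∈ doublyStochastic ℝ ι) (y : ι → ℝ) :
    y ⬝ᵥ (A *ᵥ y) = ∑ i, y i ^ 2 - (∑ i, ∑ j, A i j * (y i - y j) ^ 2) / 2 := by
  have hrow : ∑ i, ∑ j, A i j * y i ^ 2 = ∑ i, y i ^ 2 := by
    simp_rw [← sum_mul, sum_row_of_mem_doublyStochastic hA, one_mul]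
  have hcol : ∑ i, ∑ j, A i j * y j ^ 2 = ∑ j, y j ^ 2 := by
    rw [sum_comm]
    simp_rw [← sum_mul, sum_col_of_mem_doublyStochastic hA, one_mul]
  have hcross : ∑ i, ∑ j, A i j * (y i * y j) = y ⬝ᵥ (A *ᵥ y) := by
    simp_rw [dotProduct, mulVec, dotProduct, mul_sum]
    exact sum_congr rfl fun i _ => sum_congr rfl fun j _ => by ring
  have hexpand : ∑ i, ∑ j, A i j * (y i - y j) ^ 2 =
      ∑ i, ∑ j, A i j * y i ^ 2 + ∑ i, ∑ j, A i j * y j ^ 2 -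
        2 * ∑ i, ∑ j, A i j * (y i * y j) := by
    simp_rw [mul_sum, ← sum_add_distrib, ← sum_sub_distrib]
    exact sum_congr rfl fun i _ => sum_congr rfl fun j _ => by ring
  rw [hexpand, hrow, hcol, hcross]
  ring

theorem two_smul_sub_one_mem_doublyStochastic (hA : A ∈ doublyStochastic ℝ ι)
    (hdiag : ∀ i, 1 / 2 ≤ A i i) : (2 : ℝ) • A - 1 ∈ doublyStochastic ℝ ι := by
  rw [mem_doublyStochastic_iff_sum]
  refine ⟨fun i j => ?_, fun i => ?_, fun j => ?_⟩
  · rcases eq_or_ne i j with rfl | hij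
    · simp only [Matrix.sub_apply, Matrix.smul_apply, one_apply_eq, smul_eq_mul]
      linarith [hdiag i]
    · simpa [one_apply_ne hij] using nonneg_of_mem_doublyStochastic hA
  · simp [sum_sub_distrib, ← mul_sum, sum_row_of_mem_doublyStochastic hA, one_apply]
    norm_num
  · simp [sum_sub_distrib, ← mul_sum, sum_col_of_mem_doublyStochastic hA, one_apply]
    norm_num

theorem sum_sq_mulVec_le_dotProduct_mulVec (hA : A ∈ doublyStochastic ℝ ι)
    (hdiag : ∀ i, 1 / 2 ≤ A i i) (y : ι → ℝ) :
    ∑ i, (A *ᵥ y) i ^ 2 ≤ y ⬝ᵥ (A *ᵥ y) := by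
  set B := (2 : ℝ) • A - 1
  have hAy : ∀ i, (A *ᵥ y) i = (y i + (B *ᵥ y) i) / 2 := fun i => by
    simp [B, sub_mulVec, smul_mulVec]
  have hB := sum_sq_mulVec_le_of_mem_doublyStochastic
    (two_smul_sub_one_mem_doublyStochastic hA hdiag) y
  calc ∑ i, (A *ᵥ y) i ^ 2 = ∑ i, (y i * (A *ᵥ y) i + ((B *ᵥ y) i ^ 2 - y i ^ 2) / 4) :=
        sum_congr rfl fun i _ => by rw [hAy]; ring
    _ = y ⬝ᵥ (A *ᵥ y) + (∑ i, (B *ᵥ y) i ^ 2 - ∑ i, y i ^ 2) / 4 := by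
        rw [sum_add_distrib, ← sum_div, sum_sub_distrib]; rfl
    _ ≤ y ⬝ᵥ (A *ᵥ y) := by linarith

theorem sum_sq_mulVec_le_sub_sum_mul_sq_sub (hA : A ∈ doublyStochastic ℝ ι)
    (hdiag : ∀ i, 1 / 2 ≤ A i i) (y : ι → ℝ) :
    ∑ i, (A *ᵥ y) i ^ 2 ≤ ∑ i, y i ^ 2 - (∑ i, ∑ j, A i j * (y i - y j) ^ 2) / 2 :=
  dotProduct_mulVec_eq_sub_sum_mul_sq_sub hA y ▸ sum_sq_mulVec_le_dotProduct_mulVec hA hdiag y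

theorem sum_sq_sub_le_pow_mul_of_contraction (hA : A ∈ doublyStochastic ℝ ι) {c : ℝ} (hc : 0 ≤ c)
    (hcontr : ∀ y : ι → ℝ, ∑ i, y i = 0 → ∑ i, (A *ᵥ y) i ^ 2 ≤ c * ∑ i, y i ^ 2)
    {x : ℕ → ι → ℝ} (hx : ∀ t, x (t + 1) = A *ᵥ x t) {a : ℝ} (ha : ∑ i, (x 0 i - a) = 0)
    (t : ℕ) : ∑ i, (x t i - a) ^ 2 ≤ c ^ t * ∑ i, (x 0 i - a) ^ 2 := by
  have hshift : ∀ t, (fun i => x (t + 1) i - a) = A *ᵥ fun i => x t i - a := fun t => by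
    have hsub : (fun i => x t i - a) = x t - a • 1 := by ext; simp
    rw [hsub, mulVec_sub, mulVec_smul, mulVec_one_of_mem_doublyStochastic hA, ← hx]
    ext; simp
  have hmean : ∀ t, ∑ i, (x t i - a) = 0 := fun t => by
    induction t with
    | zero => exact ha
    | succ t ih =>
      exact (congrArg (fun v => ∑ i, v i) (hshift t)).trans
        ((sum_mulVec_of_mem_doublyStochastic hA).trans ih)
  induction t with
  | zero => simp
  | succ t ih =>
    calc ∑ i, (x (t + 1) i - a) ^ 2 = ∑ i, (A *ᵥ fun i => x t i - a) i ^ 2 := by rw [← hshift]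
      _ ≤ c * ∑ i, (x t i - a) ^ 2 := hcontr _ (hmean t)
      _ ≤ c * (c ^ t * ∑ i, (x 0 i - a) ^ 2) := mul_le_mul_of_nonneg_left ih hc
      _ = c ^ (t + 1) * ∑ i, (x 0 i - a) ^ 2 := by ring

end DoublyStochastic

namespace SimpleGraph

variable {V : Type*} [Fintype V] {G : SimpleGraph V} [DecidableRel G.Adj]

variable (G) in
noncomputable def metropolisWeight (i j : V) : ℝ :=
  if G.Adj i j then 1 / (2 * (max (G.degree i) (G.degree j) : ℝ)) else 0

variable (G) in
noncomputable def metropolisDirichletForm (y : V → ℝ) : ℝ :=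
  ∑ a, ∑ b, G.metropolisWeight a b * (y a - y b) ^ 2

theorem metropolisWeight_nonneg (i j : V) : 0 ≤ G.metropolisWeight i j := by
  unfold metropolisWeight
  split_ifs <;> positivity

theorem metropolisDirichletForm_nonneg (y : V → ℝ) : 0 ≤ G.metropolisDirichletForm y :=
  sum_nonneg fun _ _ => sum_nonneg fun _ _ => mul_nonneg (metropolisWeight_nonneg _ _) (sq_nonneg _)

theorem metropolisWeight_comm (i j : V) : G.metropolisWeight i j = G.metropolisWeight j i := by
  simp only [metropolisWeight, G.adj_comm i j, max_comm]

@[simp]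
theorem metropolisWeight_self (i : V) : G.metropolisWeight i i = 0 := by
  simp [metropolisWeight]

theorem metropolisWeight_of_adj {i j : V} (h : G.Adj i j) :
    G.metropolisWeight i j = 1 / (2 * (max (G.degree i) (G.degree j) : ℝ)) :=
  if_pos h

theorem sum_metropolisWeight_le_half (i : V) : ∑ j, G.metropolisWeight i j ≤ 1 / 2 := by
  have hterm : ∀ j ∈ G.neighborFinset i,
      1 / (2 * (max (G.degree i) (G.degree j) : ℝ)) ≤ 1 / (2 * G.degree i) := fun j hj => by
    have : 0 < G.degree i := (G.degree_pos_iff_exists_adj i).2 ⟨j, (G.mem_neighborFinset i j).1 hj⟩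
    gcongr
    exact le_max_left _ _
  calc ∑ j, G.metropolisWeight i j
      = ∑ j ∈ G.neighborFinset i, 1 / (2 * (max (G.degree i) (G.degree j) : ℝ)) := by
        rw [neighborFinset_eq_filter, sum_filter]; rfl
    _ ≤ ∑ _j ∈ G.neighborFinset i, 1 / (2 * (G.degree i : ℝ)) := sum_le_sum hterm
    _ = G.degree i / (2 * G.degree i) := by
        rw [sum_const, card_neighborFinset_eq_degree, nsmul_eq_mul, mul_one_div]
    _ ≤ 1 / 2 := by
        rw [div_mul_eq_div_div_swap]
        exact div_le_div_of_nonneg_right (div_self_le_one _) zero_le_two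

variable [DecidableEq V]

variable (G) in
def closedNeighborFinset (v : V) : Finset V := insert v (G.neighborFinset v)

theorem card_closedNeighborFinset (v : V) : #(G.closedNeighborFinset v) = G.degree v + 1 := by
  rw [closedNeighborFinset, card_insert_of_notMem (G.notMem_neighborFinset_self v),
    card_neighborFinset_eq_degree]

theorem reachable_and_dist_le_one_of_mem_closedNeighborFinset {v w : V}
    (h : w ∈ G.closedNeighborFinset v) : G.Reachable v w ∧ G.dist v w ≤ 1 := by
  rcases mem_insert.1 h with rfl | hadj
  · simp
  · rw [mem_neighborFinset] at hadj
    exact ⟨hadj.reachable, (dist_eq_one_iff_adj.2 hadj).le⟩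

/-- If the closed neighbourhoods of `p.getVert s` and `p.getVert t` met, the walk could be
shortened by going through the common vertex. -/
theorem Walk.disjoint_closedNeighborFinset_getVert {u v : V} (p : G.Walk u v)
    (hp : p.length = G.dist u v) {s t : ℕ} (hst : s + 3 ≤ t) (ht : t ≤ p.length) :
    Disjoint (G.closedNeighborFinset (p.getVert s)) (G.closedNeighborFinset (p.getVert t)) := by
  refine Finset.disjoint_left.2 fun w hws hwt => ?_
  obtain ⟨hreach_s, hdist_s⟩ := reachable_and_dist_le_one_of_mem_closedNeighborFinset hws
  obtain ⟨-, hdist_t⟩ := reachable_and_dist_le_one_of_mem_closedNeighborFinset hwt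
  have hmid : G.dist (p.getVert s) (p.getVert t) ≤ 2 := by
    have := hreach_s.dist_triangle_left (p.getVert t)
    rw [dist_comm (u := w)] at this
    omega
  have hstart : G.dist u (p.getVert s) ≤ s :=
    (dist_le (p.take s)).trans (by rw [Walk.take_length]; exact min_le_left _ _)
  have hend : G.dist (p.getVert t) v ≤ p.length - t :=
    (dist_le (p.drop t)).trans_eq (p.drop_length t)
  have htri₁ := (p.take s).reachable.dist_triangle_left v
  have htri₂ := (p.drop t).reachable.dist_triangle_right (p.getVert s)
  omega

theorem Walk.sum_degree_getVert_le {u v : V} (p : G.Walk u v) (hp : p.length = G.dist u v) :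
    ∑ t ∈ range (p.length + 1), (G.degree (p.getVert t) + 1) ≤ 3 * Fintype.card V := by
  have hdisj : ∀ r, ((range (p.length + 1)).filter (· % 3 = r) : Set ℕ).PairwiseDisjoint
      (fun t => G.closedNeighborFinset (p.getVert t)) := by
    intro r s hs t ht hne
    simp only [coe_filter, mem_range, Set.mem_ofPred_eq] at hs ht
    rcases lt_or_gt_of_ne hne with h | h
    · exact p.disjoint_closedNeighborFinset_getVert hp (by omega) (by omega)
    · exact (p.disjoint_closedNeighborFinset_getVert hp (by omega) (by omega)).symm
  calc ∑ t ∈ range (p.length + 1), (G.degree (p.getVert t) + 1)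
      = ∑ r ∈ range 3, ∑ t ∈ (range (p.length + 1)).filter (· % 3 = r),
          #(G.closedNeighborFinset (p.getVert t)) := by
        simp_rw [card_closedNeighborFinset]
        exact (sum_fiberwise_of_maps_to (fun t _ => mem_range.2 (Nat.mod_lt t three_pos)) _).symm
    _ ≤ ∑ _r ∈ range 3, Fintype.card V :=
        sum_le_sum fun r _ => (card_biUnion (hdisj r)).symm.trans_le (card_le_univ _)
    _ = 3 * Fintype.card V := by simp

theorem Walk.sum_metropolisWeight_getVert_le {u v : V} {p : G.Walk u v} (hp : p.IsPath)
    (y : V → ℝ) :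
    ∑ t ∈ range p.length, G.metropolisWeight (p.getVert t) (p.getVert (t + 1)) *
      (y (p.getVert t) - y (p.getVert (t + 1))) ^ 2 ≤ G.metropolisDirichletForm y := by
  set f : V × V → ℝ := fun q => G.metropolisWeight q.1 q.2 * (y q.1 - y q.2) ^ 2
  have hinj : Set.InjOn (fun t => (p.getVert t, p.getVert (t + 1))) (range p.length) :=
    fun s hs t ht hst => hp.getVert_injOn (by simp at hs ⊢; omega) (by simp at ht ⊢; omega)
      (congrArg Prod.fst hst)
  calc _ = ∑ q ∈ (range p.length).image (fun t => (p.getVert t, p.getVert (t + 1))), f q :=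
        (sum_image hinj).symm
    _ ≤ ∑ q, f q := sum_le_univ_sum_of_nonneg fun q =>
        mul_nonneg (metropolisWeight_nonneg _ _) (sq_nonneg _)
    _ = G.metropolisDirichletForm y := Fintype.sum_prod_type f

theorem Walk.sum_max_degree_getVert_le {u v : V} (p : G.Walk u v) (hp : p.length = G.dist u v) :
    ∑ t ∈ range p.length, 2 * max (G.degree (p.getVert t)) (G.degree (p.getVert (t + 1))) ≤
      12 * Fintype.card V := by
  have hsum := p.sum_degree_getVert_le hp
  have hfirst : ∑ t ∈ range p.length, (G.degree (p.getVert t) + 1) ≤ 3 * Fintype.card V := by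
    rw [sum_range_succ] at hsum; omega
  have hsecond : ∑ t ∈ range p.length, (G.degree (p.getVert (t + 1)) + 1) ≤
      3 * Fintype.card V := by
    rw [sum_range_succ'] at hsum; omega
  calc _ ≤ ∑ t ∈ range p.length,
        (2 * (G.degree (p.getVert t) + 1) + 2 * (G.degree (p.getVert (t + 1)) + 1)) :=
        sum_le_sum fun t _ => by omega
    _ ≤ 12 * Fintype.card V := by rw [sum_add_distrib, ← mul_sum, ← mul_sum]; omega

theorem Walk.sq_sub_le_metropolisDirichletForm {u v : V} (p : G.Walk u v)
    (hp : p.length = G.dist u v) (y : V → ℝ) :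
    (y u - y v) ^ 2 ≤ 12 * Fintype.card V * G.metropolisDirichletForm y := by
  set c : ℕ → ℝ := fun t => 2 * (max (G.degree (p.getVert t)) (G.degree (p.getVert (t + 1))) : ℝ)
  set δ : ℕ → ℝ := fun t => y (p.getVert t) - y (p.getVert (t + 1))
  have hc : ∀ t < p.length,
      0 < c t ∧ G.metropolisWeight (p.getVert t) (p.getVert (t + 1)) = 1 / c t :=
    fun t ht => by
      have hadj := p.adj_getVert_succ ht
      have : 0 < G.degree (p.getVert t) := (G.degree_pos_iff_exists_adj _).2 ⟨_, hadj⟩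
      exact ⟨by positivity, metropolisWeight_of_adj hadj⟩
  have htelescope : ∑ t ∈ range p.length, δ t = y u - y v := by
    rw [sum_range_sub' (fun t => y (p.getVert t)), p.getVert_zero, p.getVert_length]
  have hcsum : ∑ t ∈ range p.length, c t ≤ 12 * Fintype.card V := by
    simp only [c]
    exact_mod_cast p.sum_max_degree_getVert_le hp
  have hpath := p.sum_metropolisWeight_getVert_le (p.isPath_of_length_eq_dist hp) y
  calc (y u - y v) ^ 2
      ≤ (∑ t ∈ range p.length, c t) *
          ∑ t ∈ range p.length, G.metropolisWeight (p.getVert t) (p.getVert (t + 1)) * δ t ^ 2 := by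
        rw [← htelescope]
        refine sum_sq_le_sum_mul_sum_of_sq_le_mul _ (fun t ht => (hc t (mem_range.1 ht)).1.le)
          (fun t _ => mul_nonneg (metropolisWeight_nonneg _ _) (sq_nonneg _)) fun t ht => ?_
        obtain ⟨hct, hW⟩ := hc t (mem_range.1 ht)
        rw [hW, ← mul_assoc, mul_one_div_cancel hct.ne', one_mul]
    _ ≤ 12 * Fintype.card V * G.metropolisDirichletForm y :=
        mul_le_mul hcsum hpath (sum_nonneg fun t _ => mul_nonneg (metropolisWeight_nonneg _ _)
          (sq_nonneg _)) (by positivity)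

theorem sum_sq_le_metropolisDirichletForm (hG : G.Preconnected) {y : V → ℝ} (hy : ∑ i, y i = 0) :
    ∑ i, y i ^ 2 ≤ 6 * Fintype.card V ^ 2 * G.metropolisDirichletForm y := by
  set n : ℝ := (Fintype.card V : ℝ)
  have hpairs : ∑ i, ∑ j, (y i - y j) ^ 2 = 2 * n * ∑ i, y i ^ 2 := by
    have : ∀ i j, (y i - y j) ^ 2 = y i ^ 2 + y j ^ 2 - 2 * y i * y j := fun i j => by ring
    simp_rw [this, sum_sub_distrib, sum_add_distrib, ← mul_sum, hy]
    simp only [sum_const, card_univ, nsmul_eq_mul, ← mul_sum, mul_zero, n]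
    ring
  have hbound : ∑ i, ∑ j, (y i - y j) ^ 2 ≤ n ^ 2 * (12 * n * G.metropolisDirichletForm y) := by
    calc _ ≤ ∑ _i : V, ∑ _j : V, 12 * n * G.metropolisDirichletForm y :=
          sum_le_sum fun i _ => sum_le_sum fun j _ => by
            obtain ⟨p, hp⟩ := (hG i j).exists_walk_length_eq_dist
            exact p.sq_sub_le_metropolisDirichletForm hp y
      _ = _ := by simp [n]; ring
  have hD := G.metropolisDirichletForm_nonneg y
  rcases (Nat.cast_nonneg (Fintype.card V) : (0 : ℝ) ≤ n).eq_or_lt with hn | hn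
  · have : IsEmpty V := Fintype.card_eq_zero_iff.1 (by exact_mod_cast hn.symm)
    rw [univ_eq_empty, sum_empty]
    positivity
  · nlinarith

variable (G) in
noncomputable def lazyMetropolisMatrix : Matrix V V ℝ :=
  Matrix.of fun i j => if i = j then 1 - ∑ l, G.metropolisWeight i l else G.metropolisWeight i j

theorem lazyMetropolisMatrix_comm (i j : V) :
    G.lazyMetropolisMatrix i j = G.lazyMetropolisMatrix j i := by
  rcases eq_or_ne i j with rfl | hij
  · rfl
  · simp [lazyMetropolisMatrix, hij, hij.symm, metropolisWeight_comm i j]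

theorem half_le_lazyMetropolisMatrix_self (i : V) : 1 / 2 ≤ G.lazyMetropolisMatrix i i := by
  simp only [lazyMetropolisMatrix, Matrix.of_apply, if_true]
  linarith [G.sum_metropolisWeight_le_half i]

theorem lazyMetropolisMatrix_mem_doublyStochastic :
    G.lazyMetropolisMatrix ∈ doublyStochastic ℝ V := by
  have hrow : ∀ i, ∑ j, G.lazyMetropolisMatrix i j = 1 := fun i => by
    have hsplit : ∀ j, G.lazyMetropolisMatrix i j =
        (if i = j then 1 - ∑ l, G.metropolisWeight i l else 0) + G.metropolisWeight i j := by
      intro j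
      rcases eq_or_ne i j with rfl | hij <;> simp [lazyMetropolisMatrix, *]
    simp [hsplit, sum_add_distrib]
  refine mem_doublyStochastic_iff_sum.2 ⟨fun i j => ?_, hrow, fun j => ?_⟩
  · rcases eq_or_ne i j with rfl | hij
    · linarith [G.half_le_lazyMetropolisMatrix_self i]
    · simpa [lazyMetropolisMatrix, hij] using G.metropolisWeight_nonneg i j
  · simp_rw [lazyMetropolisMatrix_comm _ j, hrow]

theorem sum_lazyMetropolisMatrix_mul_sq_sub (y : V → ℝ) :
    ∑ i, ∑ j, G.lazyMetropolisMatrix i j * (y i - y j) ^ 2 = G.metropolisDirichletForm y := by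
  refine sum_congr rfl fun i _ => sum_congr rfl fun j _ => ?_
  rcases eq_or_ne i j with rfl | hij <;> simp [lazyMetropolisMatrix, *]

theorem sum_sq_lazyMetropolisMatrix_mulVec_le (hG : G.Preconnected) {y : V → ℝ}
    (hy : ∑ i, y i = 0) :
    ∑ i, (G.lazyMetropolisMatrix *ᵥ y) i ^ 2 ≤
      (1 - 1 / (37 * (Fintype.card V : ℝ) ^ 2)) * ∑ i, y i ^ 2 := by
  have hstep := sum_sq_mulVec_le_sub_sum_mul_sq_sub G.lazyMetropolisMatrix_mem_doublyStochastic
    G.half_le_lazyMetropolisMatrix_self y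
  rw [sum_lazyMetropolisMatrix_mul_sq_sub] at hstep
  have hpoincare := G.sum_sq_le_metropolisDirichletForm hG hy
  have hD := G.metropolisDirichletForm_nonneg y
  have hgap : 1 / (37 * (Fintype.card V : ℝ) ^ 2) * ∑ i, y i ^ 2 ≤
      G.metropolisDirichletForm y / 2 := by
    rcases (Fintype.card V).eq_zero_or_pos with hn | hn
    · simp [hn]; linarith
    · rw [one_div_mul_eq_div, div_le_iff₀ (by positivity)]
      nlinarith
  linarith

end SimpleGraph

namespace SimpleGraph

variable {V : Type*} {r : V → V → Prop}

theorem fromRel_adj_iff_of_symm (hr : ∀ i j, r i j → r j i) {v w : V} :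
    (fromRel r).Adj v w ↔ v ≠ w ∧ r v w := by
  rw [fromRel_adj]
  exact and_congr_right fun _ => ⟨fun h => h.elim id (hr w v), Or.inl⟩

theorem fromRel_preconnected (hr : ∀ i j, Relation.ReflTransGen r i j) :
    (fromRel r).Preconnected := by
  intro i j
  induction hr i j with
  | refl => rfl
  | tail _ hbc ih =>
    rename_i b c _
    rcases eq_or_ne b c with rfl | hne
    · exact ih
    · exact ih.trans (Adj.reachable ((fromRel_adj r b c).2 ⟨hne, Or.inl hbc⟩))

open Classical in
theorem eq_lazyMetropolisMatrix_fromRel [Fintype V] [DecidableEq V] (hr : ∀ i j, r i j → r j i)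
    {d : V → ℕ} (hd : ∀ i, d i = (Finset.univ.filter fun j => j ≠ i ∧ r i j).card)
    {A : Matrix V V ℝ}
    (hA : ∀ i j, A i j =
      if j = i then
        1 - ∑ l ∈ Finset.univ.filter (fun l => l ≠ i ∧ r i l), 1 / (2 * (max (d i) (d l) : ℝ))
      else if r i j then 1 / (2 * (max (d i) (d j) : ℝ)) else 0) :
    A = (fromRel r).lazyMetropolisMatrix := by
  have hadj : ∀ i j, (fromRel r).Adj i j ↔ j ≠ i ∧ r i j := fun i j => by
    rw [fromRel_adj_iff_of_symm hr, ne_comm]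
  have hdeg : ∀ i, (fromRel r).degree i = d i := fun i => by
    rw [hd, ← card_neighborFinset_eq_degree, neighborFinset_eq_filter]
    simp only [hadj]
  ext i j
  simp only [hA, lazyMetropolisMatrix, Matrix.of_apply, metropolisWeight, hadj, hdeg,
    eq_comm (a := i)]
  split_ifs <;> simp_all [sum_filter]

end SimpleGraph

open Classical in
theorem lazy_metropolis_contraction_general
    (n : ℕ)
    (E : Fin n → Fin n → Prop)
    (hE_symm : ∀ i j, E i j → E j i)
    (hE_conn : ∀ i j, Relation.ReflTransGen E i j)
    (d : Fin n → ℕ)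
    (hd : ∀ i, d i = (Finset.univ.filter fun j => j ≠ i ∧ E i j).card)
    (A : Matrix (Fin n) (Fin n) ℝ)
    (hA : ∀ i j, A i j =
      if j = i then
        1 - ∑ l ∈ Finset.univ.filter (fun l => l ≠ i ∧ E i l),
              1 / (2 * (max (d i) (d l) : ℝ))
      else if E i j then 1 / (2 * (max (d i) (d j) : ℝ)) else 0)
    (x : ℕ → Fin n → ℝ)
    (hx : ∀ t, x (t + 1) = A.mulVec (x t))
    (xbar : ℝ) (hxbar : xbar = (∑ j, x 0 j) / n) :
    ∀ t : ℕ, ∑ i, (x t i - xbar) ^ 2 ≤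
      (1 - 1 / (37 * (n : ℝ) ^ 2)) ^ t * ∑ i, (x 0 i - xbar) ^ 2 := by
  set G := SimpleGraph.fromRel E
  obtain rfl : A = G.lazyMetropolisMatrix :=
    SimpleGraph.eq_lazyMetropolisMatrix_fromRel hE_symm hd hA
  have hmean : ∑ i, (x 0 i - xbar) = 0 := by
    rcases n.eq_zero_or_pos with rfl | hn
    · simp
    · rw [sum_sub_distrib, sum_const, card_univ, Fintype.card_fin, nsmul_eq_mul, hxbar,
        mul_div_cancel₀ _ (by positivity), sub_self]
  have hc : 0 ≤ 1 - 1 / (37 * (n : ℝ) ^ 2) := by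
    rcases n.eq_zero_or_pos with rfl | hn
    · norm_num
    · rw [sub_nonneg, div_le_one (by positivity)]
      have : (1 : ℝ) ≤ n := by exact_mod_cast hn
      nlinarith
  refine sum_sq_sub_le_pow_mul_of_contraction G.lazyMetropolisMatrix_mem_doublyStochastic hc
    (fun y hy => ?_) hx hmean
  simpa using G.sum_sq_lazyMetropolisMatrix_mulVec_le (SimpleGraph.fromRel_preconnected hE_conn) hy

open Classical in
/-- With the lazy Metropolis weights, the consensus iteration satisfies
`‖x(t) - x̄ 1‖₂² ≤ (1 - 1/(37 n²))ᵗ ‖x(0) - x̄ 1‖₂²`. -/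
theorem lazy_metropolis_contraction
    (n : ℕ) (hn : 0 < n)
    (E : Fin n → Fin n → Prop)
    (hE_symm : ∀ i j, E i j → E j i)
    (hE_refl : ∀ i, E i i)
    (hE_conn : ∀ i j, Relation.ReflTransGen E i j)
    (d : Fin n → ℕ)
    (hd : ∀ i, d i = (Finset.univ.filter fun j => j ≠ i ∧ E i j).card)
    (A : Matrix (Fin n) (Fin n) ℝ)
    (hA : ∀ i j, A i j =
      if j = i then
        1 - ∑ l ∈ Finset.univ.filter (fun l => l ≠ i ∧ E i l),
              1 / (2 * (max (d i) (d l) : ℝ))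
      else if E i j then 1 / (2 * (max (d i) (d j) : ℝ)) else 0)
    (x : ℕ → Fin n → ℝ)
    (hx : ∀ t, x (t + 1) = A.mulVec (x t))
    (xbar : ℝ) (hxbar : xbar = (∑ j, x 0 j) / n) :
    ∀ t : ℕ, ∑ i, (x t i - xbar) ^ 2 ≤
      (1 - 1 / (37 * (n : ℝ) ^ 2)) ^ t * ∑ i, (x 0 i - xbar) ^ 2 :=
  lazy_metropolis_contraction_general n E hE_symm hE_conn d hd A hA x hx xbar hxbar
end
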